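/- arXiv:1401.7183 — 6 statements merged into one kernel-verified Lean document; each statement's English description precedes it below -/
import Mathlib

section
/- Let S be a finite nonempty set of positive integers and let s = max S. Then there exists a periodic independent set A in the distance graph G(S), with period at most s·2^s, such that δ(A) = ᾱ(S). -/
/-!
Read an independent set through windows of length `s = max S`. Among the windows starting at
`t = 0, …, 2 ^ s` two coincide, say at `t` and `t + c` with `0 < c ≤ 2 ^ s`. The block
`[t, t + c)`, repeated with period `c`, is then independent, so it has at most `μ c` elements,
where `μ` is the largest density of an independent set of period at most `2 ^ s`; and cutting the
block out leaves an independent set, because what follows the cut is seen through the same window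
as what preceded it. Induction on the length bounds the number of elements in any interval of
length `N` by `μ N + 2 ^ s`, so every independent set has density at most `μ`, and `μ` is
attained by a periodic independent set.
-/

open Filter

/-- The upper density of a set of integers. -/
noncomputable def density (A : Set ℤ) : ℝ :=
  Filter.limsup
    (fun N : ℕ => ((A ∩ Set.Icc (-(N : ℤ)) (N : ℤ)).ncard : ℝ) / (2 * (N : ℝ) + 1))
    Filter.atTop

/-- A set of integers is independent in the distance graph `G(S)` if no two distinct
elements differ by an element of `S`. -/
def IsIndepSet (S : Finset ℕ) (A : Set ℤ) : Prop :=
  ∀ a ∈ A, ∀ b ∈ A, a ≠ b → (a - b).natAbs ∉ S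

/-- The independence ratio of the distance graph `G(S)`. -/
noncomputable def indRatio (S : Finset ℕ) : ℝ :=
  sSup (density '' {A : Set ℤ | IsIndepSet S A})

open Finset Function Topology

lemma Nat.count_congr {p q : ℕ → Prop} [DecidablePred p] [DecidablePred q] {n : ℕ}
    (h : ∀ k < n, p k ↔ q k) : Nat.count p n = Nat.count q n :=
  le_antisymm (Nat.count_mono_left fun k hk => (h k hk).1)
    (Nat.count_mono_left fun k hk => (h k hk).2)

def IsIndepSeq (S : Finset ℕ) (p : ℕ → Prop) : Prop :=
  ∀ ⦃m n : ℕ⦄, m < n → p m → p n → n - m ∉ S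

lemma IsIndepSeq.comp_add {S : Finset ℕ} {p : ℕ → Prop} (hp : IsIndepSeq S p) (t : ℕ) :
    IsIndepSeq S fun i => p (t + i) :=
  fun m n hmn hm hn => by
    rw [← Nat.add_sub_add_left t n m]
    exact hp (by omega) hm hn

lemma IsIndepSet.isIndepSeq_add {S : Finset ℕ} {A : Set ℤ} (hA : IsIndepSet S A) (a : ℤ) :
    IsIndepSeq S fun k => a + k ∈ A := fun m n hmn hm hn hS =>
  hA _ hm _ hn (by omega) (by rwa [show (a + m - (a + n)).natAbs = n - m by omega])

lemma isIndepSet_of_lt {S : Finset ℕ} {A : Set ℤ}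
    (h : ∀ a ∈ A, ∀ b ∈ A, a < b → (b - a).toNat ∉ S) : IsIndepSet S A := by
  intro a ha b hb hab
  rcases hab.lt_or_gt with hlt | hlt
  · simpa [show (a - b).natAbs = (b - a).toNat by omega] using h a ha b hb hlt
  · simpa [show (a - b).natAbs = (a - b).toNat by omega] using h b hb a ha hlt

lemma exists_window_repeat (p : ℕ → Prop) (s : ℕ) :
    ∃ t c, 0 < c ∧ t + c ≤ 2 ^ s ∧ ∀ i < s, p (t + i) ↔ p (t + c + i) := by
  have hcard : Fintype.card (Fin s → Prop) < Fintype.card (Fin (2 ^ s + 1)) := by simp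
  obtain ⟨x, y, hxy, hwin⟩ := Fintype.exists_ne_map_eq_of_card_lt
    (fun (t : Fin (2 ^ s + 1)) (i : Fin s) => p (t + i)) hcard
  wlog hlt : x < y generalizing x y
  · exact this y x hxy.symm hwin.symm (lt_of_le_of_ne (not_lt.1 hlt) hxy.symm)
  have hy := y.isLt
  rw [Fin.lt_def] at hlt
  refine ⟨x, y - x, by omega, by omega, fun i hi => ?_⟩
  rw [show (x : ℕ) + (y - x) + i = y + i by omega]
  exact (congrFun hwin ⟨i, hi⟩).to_iff

lemma iff_mod_of_window_repeat {q : ℕ → Prop} {s c : ℕ} (hc : 0 < c)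
    (h : ∀ i < s, q i ↔ q (c + i)) : ∀ i < c + s, q i ↔ q (i % c) := by
  intro i
  induction i using Nat.strong_induction_on with
  | _ i ih =>
  intro hi
  rcases lt_or_ge i c with hic | hic
  · rw [Nat.mod_eq_of_lt hic]
  · obtain ⟨j, rfl⟩ := Nat.exists_eq_add_of_le hic
    rw [← h j (by omega), Nat.add_mod_left]
    exact ih j (by omega) (by omega)

def periodize (c : ℕ) (B : Finset ℕ) : Set ℤ := {z | (z % c).toNat ∈ B}

lemma periodize_add_self (c : ℕ) (B : Finset ℕ) (z : ℤ) :
    z + c ∈ periodize c B ↔ z ∈ periodize c B := by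
  simp [periodize]

lemma ncard_periodize_inter_Ico {c : ℕ} {B : Finset ℕ} (hB : B ⊆ range c) :
    (periodize c B ∩ Set.Ico 0 (c : ℤ)).ncard = B.card := by
  rw [← Set.ncard_coe_finset B,
    ← Set.ncard_image_of_injective _ (Nat.cast_injective (R := ℤ))]
  congr 1
  ext z
  simp only [periodize, Set.mem_inter_iff, Set.mem_ofPred_eq, Set.mem_Ico, Set.mem_image,
    Finset.mem_coe]
  constructor
  · rintro ⟨hz, h0, hc⟩
    exact ⟨z.toNat, by rwa [Int.emod_eq_of_lt h0 hc] at hz, by omega⟩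
  · rintro ⟨n, hn, rfl⟩
    have hnc : n < c := mem_range.1 (hB hn)
    refine ⟨?_, by positivity, by exact_mod_cast hnc⟩
    rwa [← Int.natCast_mod, Nat.mod_eq_of_lt hnc, Int.toNat_natCast]

/-- The window repeat makes `q` agree with its `c`-periodization on `[0, c + s)`, which contains
`r + d` for every residue `r < c` and every `d ∈ S`. -/
lemma isIndepSet_periodize {S : Finset ℕ} {s c : ℕ} {q : ℕ → Prop} [DecidablePred q]
    (hs : ∀ d ∈ S, d ≤ s) (hc : 0 < c) (hq : IsIndepSeq S q)
    (hrep : ∀ i < s, q i ↔ q (c + i)) : IsIndepSet S (periodize c ((range c).filter q)) := by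
  have hmem : ∀ z : ℤ, z ∈ periodize c ((range c).filter q) ↔ q (z % c).toNat := fun z => by
    have := Int.emod_lt_of_pos z (by omega : (0 : ℤ) < c)
    simp only [periodize, Set.mem_ofPred_eq, mem_filter, mem_range, and_iff_right_iff_imp]
    omega
  refine isIndepSet_of_lt fun a ha b hb hab hd => ?_
  set r := (a % c).toNat
  set d := (b - a).toNat
  have hac := Int.emod_lt_of_pos a (by omega : (0 : ℤ) < c)
  have hr : (r : ℤ) = a % c := Int.toNat_of_nonneg (Int.emod_nonneg a (by omega))
  have hbmod : (b % c).toNat = (r + d) % c := by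
    rw [show b = a % c + d + c * (a / c) by rw [Int.emod_def]; omega,
      Int.add_mul_emod_self_left, ← hr, ← Nat.cast_add, ← Int.natCast_mod, Int.toNat_natCast]
  rw [hmem] at ha hb
  rw [hbmod, ← iff_mod_of_window_repeat hc hrep _ (by have := hs d hd; omega)] at hb
  exact hq (by omega) ha hb (by rwa [Nat.add_sub_cancel_left])

def splice (p : ℕ → Prop) (t c k : ℕ) : Prop := if k < t then p k else p (k + c)

instance {p : ℕ → Prop} [DecidablePred p] {t c : ℕ} : DecidablePred (splice p t c) :=
  fun k => inferInstanceAs (Decidable (if k < t then p k else p (k + c)))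

lemma count_splice_add_count {p : ℕ → Prop} [DecidablePred p] {t c N : ℕ} (h : t + c ≤ N) :
    Nat.count (splice p t c) (N - c) + Nat.count (fun i => p (t + i)) c = Nat.count p N := by
  obtain ⟨r, rfl⟩ := Nat.exists_eq_add_of_le h
  have hhead : Nat.count (splice p t c) t = Nat.count p t :=
    Nat.count_congr fun k hk => by simp [splice, hk]
  have htail :
      Nat.count (fun k => splice p t c (t + k)) r = Nat.count (fun k => p (t + c + k)) r :=
    Nat.count_congr fun k _ => by simp [splice, Nat.add_right_comm]
  rw [show t + c + r - c = t + r by omega, Nat.count_add, Nat.count_add, Nat.count_add, hhead,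
    htail]
  ring

lemma IsIndepSeq.splice {S : Finset ℕ} {p : ℕ → Prop} {s t c : ℕ} (hp : IsIndepSeq S p)
    (hs : ∀ d ∈ S, d ≤ s) (hrep : ∀ i < s, p (t + i) ↔ p (t + c + i)) :
    IsIndepSeq S (splice p t c) := by
  intro m n hmn hm hn hd
  have hds := hs _ hd
  unfold _root_.splice at hm hn
  split_ifs at hm hn with hmt hnt hnt
  · exact hp hmn hm hn hd
  · have hwin := hrep (n - t) (by omega)
    rw [show t + (n - t) = n by omega, show t + c + (n - t) = n + c by omega] at hwin
    exact hp hmn hm (hwin.2 hn) hd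
  · omega
  · exact hp (by omega) hm hn (by rwa [Nat.add_sub_add_right])

open Classical in
noncomputable def periodicPatterns (S : Finset ℕ) (s : ℕ) : Finset (Σ _ : ℕ, Finset ℕ) :=
  (Icc 1 (2 ^ s)).sigma fun c => (range c).powerset.filter fun B => IsIndepSet S (periodize c B)

lemma mem_periodicPatterns {S : Finset ℕ} {s c : ℕ} {B : Finset ℕ} :
    (⟨c, B⟩ : Σ _ : ℕ, Finset ℕ) ∈ periodicPatterns S s ↔
      (1 ≤ c ∧ c ≤ 2 ^ s) ∧ B ⊆ range c ∧ IsIndepSet S (periodize c B) := by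
  simp [periodicPatterns]

lemma periodicPatterns_nonempty (S : Finset ℕ) (s : ℕ) : (periodicPatterns S s).Nonempty :=
  ⟨⟨1, ∅⟩, mem_periodicPatterns.2
    ⟨⟨le_rfl, Nat.one_le_two_pow⟩, empty_subset _, by simp [IsIndepSet, periodize]⟩⟩

noncomputable def maxPeriodicDensity (S : Finset ℕ) (s : ℕ) : ℝ :=
  (periodicPatterns S s).sup' (periodicPatterns_nonempty S s) fun x => (x.2.card : ℝ) / x.1

lemma card_div_le_maxPeriodicDensity {S : Finset ℕ} {s c : ℕ} {B : Finset ℕ}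
    (h : ⟨c, B⟩ ∈ periodicPatterns S s) : (B.card : ℝ) / c ≤ maxPeriodicDensity S s :=
  le_sup' (fun x : Σ _ : ℕ, Finset ℕ => (x.2.card : ℝ) / x.1) h

lemma maxPeriodicDensity_nonneg (S : Finset ℕ) (s : ℕ) : 0 ≤ maxPeriodicDensity S s := by
  obtain ⟨⟨c, B⟩, h⟩ := periodicPatterns_nonempty S s
  exact (by positivity : (0 : ℝ) ≤ B.card / c).trans (card_div_le_maxPeriodicDensity h)

lemma IsIndepSeq.count_le_of_window_repeat {S : Finset ℕ} {p : ℕ → Prop} [DecidablePred p]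
    {s t c : ℕ} (hp : IsIndepSeq S p) (hs : ∀ d ∈ S, d ≤ s) (hc : 0 < c)
    (htc : t + c ≤ 2 ^ s) (hrep : ∀ i < s, p (t + i) ↔ p (t + c + i)) :
    (Nat.count (fun i => p (t + i)) c : ℝ) ≤ maxPeriodicDensity S s * c := by
  have hrep' : ∀ i < s, p (t + i) ↔ p (t + (c + i)) := by simpa only [add_assoc] using hrep
  have hmem : ⟨c, (range c).filter fun i => p (t + i)⟩ ∈ periodicPatterns S s :=
    mem_periodicPatterns.2 ⟨⟨hc, by omega⟩, filter_subset _ _,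
      isIndepSet_periodize hs hc (hp.comp_add t) hrep'⟩
  rw [Nat.count_eq_card_filter_range, ← div_le_iff₀ (by positivity)]
  exact card_div_le_maxPeriodicDensity hmem

theorem IsIndepSeq.count_le {S : Finset ℕ} {p : ℕ → Prop} [DecidablePred p] {s : ℕ}
    (hp : IsIndepSeq S p) (hs : ∀ d ∈ S, d ≤ s) (N : ℕ) :
    (Nat.count p N : ℝ) ≤ maxPeriodicDensity S s * N + 2 ^ s := by
  induction N using Nat.strong_induction_on generalizing p with
  | _ N ih =>
  have hμ := maxPeriodicDensity_nonneg S s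
  by_cases hN : N ≤ 2 ^ s
  · have : (Nat.count p N : ℝ) ≤ 2 ^ s := by exact_mod_cast (Nat.count_le p).trans hN
    nlinarith [(Nat.cast_nonneg N : (0 : ℝ) ≤ N)]
  obtain ⟨t, c, hc, htc, hrep⟩ := exists_window_repeat p s
  have hblock := hp.count_le_of_window_repeat hs hc htc hrep
  have hrest := ih (N - c) (by omega) (hp.splice hs hrep)
  rw [← count_splice_add_count (p := p) (by omega : t + c ≤ N)]
  push_cast [Nat.cast_sub (by omega : c ≤ N)] at hrest ⊢
  linarith

namespace Function.Periodic

variable {p : ℕ → Prop} [DecidablePred p] {c : ℕ}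

lemma count_mul (hp : Periodic p c) (k : ℕ) : Nat.count p (k * c) = k * Nat.count p c := by
  induction k with
  | zero => simp
  | succ k ih =>
    have hshift : Nat.count (fun i => p (k * c + i)) c = Nat.count p c :=
      Nat.count_congr fun i _ => Iff.of_eq <| by rw [add_comm]; exact_mod_cast hp.nat_mul k i
    rw [Nat.succ_mul, Nat.count_add, ih, hshift, Nat.succ_mul]

lemma count_eq_count_mod_add (hp : Periodic p c) (n : ℕ) :
    Nat.count p n = Nat.count p (n % c) + n / c * Nat.count p c := by
  conv_lhs => rw [← Nat.mod_add_div' n c]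
  have hshift : Nat.count (fun i => p (i + n / c * c)) (n % c) = Nat.count p (n % c) :=
    Nat.count_congr fun i _ => Iff.of_eq <| by exact_mod_cast hp.nat_mul (n / c) i
  rw [Nat.count_add', hp.count_mul, hshift]

lemma count_shift (hp : Periodic p c) (t : ℕ) :
    Nat.count (fun i => p (t + i)) c = Nat.count p c := by
  have hshift : Nat.count (fun i => p (i + c)) t = Nat.count p t :=
    Nat.count_congr fun i _ => Iff.of_eq (hp i)
  have h₁ := Nat.count_add p t c
  have h₂ := Nat.count_add' p t c
  omega

lemma abs_count_sub_le (hp : Periodic p c) (hc : 0 < c) (n : ℕ) :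
    |(Nat.count p n : ℝ) - n * (Nat.count p c / c)| ≤ c := by
  have hcR : (0 : ℝ) < c := by exact_mod_cast hc
  have hn : (n : ℝ) = (n % c : ℕ) + (n / c : ℕ) * c := by
    exact_mod_cast (Nat.mod_add_div' n c).symm
  rw [hp.count_eq_count_mod_add n, hn]
  set r := n % c
  set m := Nat.count p c
  have hr : (r : ℝ) ≤ c := by exact_mod_cast (Nat.mod_lt n hc).le
  have hm : (m : ℝ) ≤ c := by exact_mod_cast Nat.count_le p
  have hpr : (Nat.count p r : ℝ) ≤ r := by exact_mod_cast Nat.count_le p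
  have hrm : (r : ℝ) * (m / c) ≤ r :=
    mul_le_of_le_one_right (by positivity) ((div_le_one hcR).2 hm)
  have hsplit : ((r : ℝ) + (n / c : ℕ) * c) * (m / c) = r * (m / c) + (n / c : ℕ) * m := by
    field_simp
  push_cast
  rw [hsplit, abs_sub_le_iff]
  constructor <;>
    nlinarith [(by positivity : (0 : ℝ) ≤ r * (m / c)), (Nat.count p r).cast_nonneg (α := ℝ)]

end Function.Periodic

lemma ncard_inter_Ico_eq_count (A : Set ℤ) [DecidablePred (· ∈ A)] (a : ℤ) (n : ℕ) :
    (A ∩ Set.Ico a (a + n)).ncard = Nat.count (fun k => a + k ∈ A) n := by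
  have hinj : Injective fun k : ℕ => a + (k : ℤ) := fun x y h => by simpa using h
  rw [Nat.count_eq_card_filter_range, ← Set.ncard_coe_finset,
    ← Set.ncard_image_of_injective _ hinj]
  congr 1
  ext z
  simp only [Set.mem_inter_iff, Set.mem_Ico, Set.mem_image, coe_filter, mem_range,
    Set.mem_ofPred_eq]
  constructor
  · rintro ⟨hz, h1, h2⟩
    refine ⟨(z - a).toNat, ⟨by omega, ?_⟩, by omega⟩
    rwa [show a + ((z - a).toNat : ℤ) = z by omega]
  · rintro ⟨k, ⟨hk, hA⟩, rfl⟩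
    exact ⟨hA, by omega, by omega⟩

lemma ncard_inter_Icc_eq_count (A : Set ℤ) [DecidablePred (· ∈ A)] (N : ℕ) :
    (A ∩ Set.Icc (-(N : ℤ)) N).ncard =
      Nat.count (fun k => -(N : ℤ) + k ∈ A) (2 * N + 1) := by
  have hIcc : Set.Icc (-(N : ℤ)) N = Set.Ico (-(N : ℤ)) (-N + ↑(2 * N + 1)) := by
    ext
    simp only [Set.mem_Icc, Set.mem_Ico]
    omega
  rw [← ncard_inter_Ico_eq_count, hIcc]

lemma tendsto_div_two_mul_add_one (C : ℝ) :
    Tendsto (fun N : ℕ => C / (2 * (N : ℝ) + 1)) atTop (𝓝 0) :=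
  tendsto_const_nhds.div_atTop <| tendsto_atTop_add_const_right _ _ <|
    (tendsto_natCast_atTop_atTop (R := ℝ)).const_mul_atTop two_pos

lemma density_eq_of_abs_sub_le {A : Set ℤ} {r C : ℝ}
    (h : ∀ N : ℕ, |((A ∩ Set.Icc (-(N : ℤ)) N).ncard : ℝ) - (2 * N + 1) * r| ≤ C) :
    density A = r := by
  refine Tendsto.limsup_eq ?_
  rw [tendsto_iff_norm_sub_tendsto_zero]
  refine squeeze_zero (fun _ => norm_nonneg _) (fun N => ?_) (tendsto_div_two_mul_add_one C)
  have hN : (0 : ℝ) < 2 * N + 1 := by positivity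
  rw [Real.norm_eq_abs, div_sub' hN.ne', abs_div, abs_of_pos hN]
  exact div_le_div_of_nonneg_right (h N) hN.le

lemma density_le_of_ncard_le {A : Set ℤ} {r C : ℝ}
    (h : ∀ N : ℕ, ((A ∩ Set.Icc (-(N : ℤ)) N).ncard : ℝ) ≤ (2 * N + 1) * r + C) :
    density A ≤ r := by
  have hlim : Tendsto (fun N : ℕ => r + C / (2 * (N : ℝ) + 1)) atTop (𝓝 r) := by
    simpa using tendsto_const_nhds.add (tendsto_div_two_mul_add_one C)
  rw [density, ← hlim.limsup_eq]
  refine limsup_le_limsup (Eventually.of_forall fun N => ?_)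
    (isCoboundedUnder_le_of_le atTop fun N => by positivity) hlim.isBoundedUnder_le
  rw [div_le_iff₀ (by positivity), add_mul, div_mul_cancel₀ _ (by positivity)]
  linarith [h N]

lemma density_eq_of_periodic {A : Set ℤ} {c : ℕ} (hc : 0 < c)
    (hA : ∀ z : ℤ, z + c ∈ A ↔ z ∈ A) :
    density A = (A ∩ Set.Ico 0 (c : ℤ)).ncard / c := by
  classical
  refine density_eq_of_abs_sub_le (C := c) fun N => ?_
  have hper : Periodic (fun k : ℕ => -(N : ℤ) + k ∈ A) c := fun k => by
    simp only [Nat.cast_add, ← add_assoc, hA]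
  have hm :
      Nat.count (fun k : ℕ => -(N : ℤ) + k ∈ A) c = (A ∩ Set.Ico 0 (c : ℤ)).ncard := by
    rw [← hper.count_shift N, ← zero_add (c : ℤ), ncard_inter_Ico_eq_count]
    exact Nat.count_congr fun i _ => by simp
  rw [ncard_inter_Icc_eq_count, ← hm]
  simpa using hper.abs_count_sub_le hc (2 * N + 1)

lemma density_periodize {c : ℕ} {B : Finset ℕ} (hc : 0 < c) (hB : B ⊆ range c) :
    density (periodize c B) = B.card / c := by
  rw [density_eq_of_periodic hc (periodize_add_self c B), ncard_periodize_inter_Ico hB]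

lemma IsIndepSet.density_le {S : Finset ℕ} {s : ℕ} {A : Set ℤ} (hs : ∀ d ∈ S, d ≤ s)
    (hA : IsIndepSet S A) : density A ≤ maxPeriodicDensity S s := by
  classical
  refine density_le_of_ncard_le (C := 2 ^ s) fun N => ?_
  rw [ncard_inter_Icc_eq_count]
  have := (hA.isIndepSeq_add (-N)).count_le hs (2 * N + 1)
  push_cast at this
  linarith

/-- There is a periodic independent set, of period at most `s * 2 ^ s` where `s = max S`,
whose density achieves the independence ratio of `G(S)`. -/
theorem exists_periodic_extremal_indep_set
    (S : Finset ℕ) (hS : S.Nonempty) (hSpos : ∀ n ∈ S, 0 < n) :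
    ∃ (A : Set ℤ) (p : ℕ),
      IsIndepSet S A ∧
      0 < p ∧ p ≤ S.max' hS * 2 ^ (S.max' hS) ∧
      (∀ z : ℤ, z + (p : ℤ) ∈ A ↔ z ∈ A) ∧
      density A = indRatio S := by
  set s := S.max' hS
  have hs : ∀ d ∈ S, d ≤ s := fun d hd => S.le_max' d hd
  obtain ⟨⟨c, B⟩, hmem, hmax⟩ := (periodicPatterns S s).exists_mem_eq_sup'
    (periodicPatterns_nonempty S s) fun x => (x.2.card : ℝ) / x.1
  obtain ⟨⟨hc, hcs⟩, hB, hind⟩ := mem_periodicPatterns.1 hmem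
  have hdens : density (periodize c B) = maxPeriodicDensity S s := by
    rw [density_periodize hc hB, maxPeriodicDensity, hmax]
  have hgreatest : IsGreatest (density '' {A | IsIndepSet S A}) (maxPeriodicDensity S s) :=
    ⟨⟨_, hind, hdens⟩, by rintro _ ⟨A, hA, rfl⟩; exact hA.density_le hs⟩
  have hperiod : c ≤ s * 2 ^ s := hcs.trans (Nat.le_mul_of_pos_left _ (hSpos s (S.max'_mem hS)))
  exact ⟨periodize c B, c, hind, hc, hperiod, periodize_add_self c B,
    hdens.trans hgreatest.csSup_eq.symm⟩
end

section
/- Let S be a finite nonempty set of positive integers, set s = max S, and let k be a positive integer such that the distance graph G(S) admits a proper k-coloring (in particular this holds when k is the chromatic number of G(S)). Then there exists a periodic proper k-coloring of G(S) with period at most s·k^s. -/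
/-!
Split `ℤ` into consecutive windows of length `s = max S`. The windows starting at
`0, s, 2s, …, k^s · s` cannot all carry different colour patterns, so two of them, at `a · s`
and `b · s` with `a < b`, coincide. Repeating the colouring of `[a s, b s)` with period
`p = (b - a) s ≤ s k^s` is again proper: an edge of length `d ≤ s` that crosses the end of a
period lands, after shifting back by `p`, in the window at `a s`, whose colours agree with those
of the window at `b s` where the original edge lives.
-/

theorem exists_lt_le_card_map_eq {β : Type*} [Fintype β] (f : ℕ → β) :
    ∃ a b : ℕ, a < b ∧ b ≤ Fintype.card β ∧ f a = f b := by
  obtain ⟨a, b, hne, hab⟩ := Fintype.exists_ne_map_eq_of_card_lt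
    (fun n : Fin (Fintype.card β + 1) => f n) (by simp)
  rcases lt_or_gt_of_ne (Fin.val_injective.ne hne) with h | h
  · exact ⟨a, b, h, Nat.lt_succ_iff.mp b.isLt, hab⟩
  · exact ⟨b, a, h, Nat.lt_succ_iff.mp a.isLt, hab.symm⟩

namespace DistanceGraph

variable {α : Type*} {S : Finset ℕ} {c : ℤ → α}

def IsProperColoring (S : Finset ℕ) (c : ℤ → α) : Prop :=
  ∀ i j : ℤ, (i - j).natAbs ∈ S → c i ≠ c j

theorem isProperColoring_iff :
    IsProperColoring S c ↔ ∀ i : ℤ, ∀ d ∈ S, c (i + d) ≠ c i := by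
  refine ⟨fun h i d hd => h _ _ (by simpa using hd), fun h i j hij => ?_⟩
  rcases (by omega : i = j + (i - j).natAbs ∨ j = i + (i - j).natAbs) with e | e
  · rw [e]; exact h j _ hij
  · rw [e]; exact (h i _ hij).symm

theorem IsProperColoring.comp_add_right (hc : IsProperColoring S c) (x : ℤ) :
    IsProperColoring S (fun i => c (i + x)) :=
  fun i j h => hc _ _ (by rwa [add_sub_add_right_eq_sub])

theorem IsProperColoring.comp_emod (hc : IsProperColoring S c) {s p : ℕ} (hp : 0 < p)
    (hsp : s ≤ p) (hS : ∀ d ∈ S, d ≤ s) (hper : ∀ x : ℤ, 0 ≤ x → x < s → c (x + p) = c x) :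
    IsProperColoring S (fun i => c (i % p)) := by
  rw [isProperColoring_iff] at hc ⊢
  intro i d hd
  have hp' : (0 : ℤ) < p := by exact_mod_cast hp
  have hds : d ≤ s := hS d hd
  have hsp' : (s : ℤ) ≤ p := by exact_mod_cast hsp
  set r := i % (p : ℤ)
  have hr0 : 0 ≤ r := Int.emod_nonneg _ hp'.ne'
  have hrp : r < p := Int.emod_lt_of_pos _ hp'
  have hid : (i + d) % (p : ℤ) = (r + d) % p := (Int.emod_add_emod i p d).symm
  rw [hid]
  by_cases h : r + d < p
  · rw [Int.emod_eq_of_lt (by omega) h]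
    exact hc r d hd
  · have hwrap : (r + d) % (p : ℤ) = r + d - p := by
      rw [← Int.sub_emod_right, Int.emod_eq_of_lt (by omega) (by omega)]
    rw [hwrap, ← hper _ (by omega) (by omega), sub_add_cancel]
    exact hc r d hd

theorem exists_window_eq [Fintype α] (c : ℤ → α) (s : ℕ) :
    ∃ a b : ℕ, a < b ∧ b ≤ Fintype.card α ^ s ∧
      ∀ t : ℕ, t < s → c (b * s + t) = c (a * s + t) := by
  obtain ⟨a, b, hab, hb, hwin⟩ :=
    exists_lt_le_card_map_eq (fun n : ℕ => fun t : Fin s => c (n * s + t))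
  refine ⟨a, b, hab, by simpa using hb, fun t ht => (congrFun hwin ⟨t, ht⟩).symm⟩

end DistanceGraph

open DistanceGraph in
theorem exists_periodic_proper_coloring_general
    (S : Finset ℕ) (hS : S.Nonempty) (hSpos : ∀ n ∈ S, 0 < n)
    (k : ℕ)
    (c : ℤ → Fin k) (hc : ∀ i j : ℤ, (i - j).natAbs ∈ S → c i ≠ c j) :
    ∃ (c' : ℤ → Fin k) (p : ℕ),
      (∀ i j : ℤ, (i - j).natAbs ∈ S → c' i ≠ c' j) ∧
      0 < p ∧ p ≤ S.max' hS * k ^ (S.max' hS) ∧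
      ∀ i : ℤ, c' (i + (p : ℤ)) = c' i := by
  set s := S.max' hS
  have hs : 0 < s := hSpos s (S.max'_mem hS)
  obtain ⟨a, b, hab, hb, hwin⟩ := exists_window_eq c s
  rw [Fintype.card_fin] at hb
  have hp : 0 < (b - a) * s := Nat.mul_pos (by omega) hs
  have hbp : (((b - a) * s : ℕ) : ℤ) + a * s = b * s := by
    push_cast [Nat.cast_sub hab.le]; ring
  have hper : ∀ x : ℤ, 0 ≤ x → x < s →
      c (x + ((b - a) * s : ℕ) + a * s) = c (x + a * s) := by
    intro x hx0 hxs
    lift x to ℕ using hx0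
    rw [add_assoc, hbp, add_comm, add_comm (x : ℤ)]
    exact hwin x (by omega)
  refine ⟨fun i => c (i % ((b - a) * s : ℕ) + a * s), (b - a) * s, ?_, hp, ?_,
    fun i => by simp only [Int.add_emod_right]⟩
  · exact (IsProperColoring.comp_add_right hc _).comp_emod hp
      (Nat.le_mul_of_pos_left s (by omega)) (fun d hd => S.le_max' d hd) hper
  · calc (b - a) * s ≤ k ^ s * s := Nat.mul_le_mul_right s (by omega)
      _ = s * k ^ s := Nat.mul_comm _ _

/-- If the distance graph `G(S)` admits a proper `k`-coloring, then it admits a periodic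
proper `k`-coloring with period at most `s * k ^ s` where `s = max S`. -/
theorem exists_periodic_proper_coloring
    (S : Finset ℕ) (hS : S.Nonempty) (hSpos : ∀ n ∈ S, 0 < n)
    (k : ℕ) (hk : 0 < k)
    (c : ℤ → Fin k) (hc : ∀ i j : ℤ, (i - j).natAbs ∈ S → c i ≠ c j) :
    ∃ (c' : ℤ → Fin k) (p : ℕ),
      (∀ i j : ℤ, (i - j).natAbs ∈ S → c' i ≠ c' j) ∧
      0 < p ∧ p ≤ S.max' hS * k ^ (S.max' hS) ∧
      ∀ i : ℤ, c' (i + (p : ℤ)) = c' i :=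
  exists_periodic_proper_coloring_general S hS hSpos k c hc
end

section
/- Let k ≥ 2 and ℓ ≥ 2 be integers. Then ᾱ({1, k, 2k, …, ℓk}) = 1/(ℓ+1), i.e., the independence ratio of the distance graph generated by {1} ∪ {jk : 1 ≤ j ≤ ℓ} equals 1/(ℓ+1). -/
open Filter

/-!
Upper bound: two integers of a window of `k * (ℓ + 1)` consecutive integers that are congruent
mod `k` differ by `j * k` with `1 ≤ j ≤ ℓ`. So an independent set meets every such window in at
most `k` points, at most one per residue class mod `k`, and its density is at most `1 / (ℓ + 1)`.

Lower bound: write `x = q * k + r` with `0 ≤ r < k` and keep `x` when `q ≡ r % 2 [ZMOD ℓ + 1]`.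
This set is `k * (ℓ + 1)`-periodic with `k` points per period. Two kept points `j * k` apart have
the same `r`, and their `q`s differ by `j`, so `ℓ + 1 ∣ j`, which is impossible. Consecutive
points either have the same `q` and `r`s of opposite parity, or lie on both sides of a multiple
of `k`, where `q` and `q + 1` would have to be `≡ r % 2 ∈ {0, 1}` and `≡ 0`. That forces
`ℓ + 1 ∣ 1` or `ℓ + 1 ∣ 2`, ruled out by `ℓ ≥ 2`.
-/

open Topology Finset

section WindowCount

variable {p : ℤ → Prop} [DecidablePred p]

lemma card_filter_Ico_add (a : ℤ) (m n : ℕ) :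
    #{y ∈ Ico a (a + (m + n : ℕ)) | p y} =
      #{y ∈ Ico a (a + m) | p y} + #{y ∈ Ico (a + m) (a + m + n) | p y} := by
  rw [← card_union_of_disjoint (disjoint_filter_filter (Ico_disjoint_Ico_consecutive _ _ _)),
    ← filter_union, Ico_union_Ico_eq_Ico (by omega) (by omega), Nat.cast_add, add_assoc]

lemma card_filter_Ico_mul_le {M K : ℕ} (h : ∀ x, #{y ∈ Ico x (x + M) | p y} ≤ K) (T : ℕ)
    (a : ℤ) : #{y ∈ Ico a (a + (T * M : ℕ)) | p y} ≤ T * K := by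
  induction T with
  | zero => simp
  | succ T ih =>
    rw [Nat.succ_mul, Nat.succ_mul, card_filter_Ico_add]
    exact add_le_add ih (h _)

lemma le_card_filter_Ico_mul {M K : ℕ} (h : ∀ x, K ≤ #{y ∈ Ico x (x + M) | p y}) (T : ℕ)
    (a : ℤ) : T * K ≤ #{y ∈ Ico a (a + (T * M : ℕ)) | p y} := by
  induction T with
  | zero => simp
  | succ T ih =>
    rw [Nat.succ_mul, Nat.succ_mul, card_filter_Ico_add]
    exact add_le_add ih (h _)

lemma card_filter_Ico_mono (a : ℤ) {m n : ℕ} (hmn : m ≤ n) :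
    #{y ∈ Ico a (a + m) | p y} ≤ #{y ∈ Ico a (a + n) | p y} :=
  card_le_card (filter_subset_filter _ (Ico_subset_Ico_right (by omega)))

lemma mul_card_filter_Ico_le {M K : ℕ} (hM : 0 < M) (h : ∀ x, #{y ∈ Ico x (x + M) | p y} ≤ K)
    (a : ℤ) (n : ℕ) : M * #{y ∈ Ico a (a + n) | p y} ≤ (n + M) * K := by
  have hcover : n ≤ (n / M + 1) * M := by
    have := Nat.lt_mul_div_succ n hM
    rw [mul_comm] at this
    omega
  calc M * #{y ∈ Ico a (a + n) | p y}
      ≤ M * ((n / M + 1) * K) :=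
        Nat.mul_le_mul_left _ ((card_filter_Ico_mono a hcover).trans (card_filter_Ico_mul_le h _ a))
    _ = (M * (n / M) + M) * K := by ring
    _ ≤ (n + M) * K := Nat.mul_le_mul_right _ (by grw [Nat.mul_div_le])

lemma le_mul_card_filter_Ico {M K : ℕ} (hM : 0 < M) (h : ∀ x, K ≤ #{y ∈ Ico x (x + M) | p y})
    (a : ℤ) (n : ℕ) : n * K ≤ M * (#{y ∈ Ico a (a + n) | p y} + K) := by
  calc n * K ≤ (M * (n / M) + M) * K :=
        Nat.mul_le_mul_right _ (by have := Nat.lt_mul_div_succ n hM; rw [mul_add] at this; omega)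
    _ = M * ((n / M) * K + K) := by ring
    _ ≤ M * (#{y ∈ Ico a (a + n) | p y} + K) := by
      gcongr
      exact (le_card_filter_Ico_mul h _ a).trans (card_filter_Ico_mono a (Nat.div_mul_le_self n M))

lemma card_filter_Ico_of_periodic {M : ℤ} (hM : 0 ≤ M) (hp : Function.Periodic p M) (a : ℤ) :
    #{y ∈ Ico a (a + M) | p y} = #{y ∈ Ico 0 M | p y} := by
  have hinj : Set.InjOn (· % M) (Ico a (a + M) : Set ℤ) := by
    refine injOn_of_card_image_eq ?_
    rw [Int.image_Ico_emod a M hM]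
    simp
  rw [← Int.image_Ico_emod a M hM, filter_image,
    card_image_of_injOn (hinj.mono (filter_subset _ _))]
  congr 1
  refine filter_congr fun y _ => ?_
  rw [Int.emod_def, mul_comm]
  exact (hp.sub_int_mul_eq (y / M)).to_iff.symm

end WindowCount

section Density

variable (A : Set ℤ) [DecidablePred (· ∈ A)]

lemma ncard_inter_Icc_eq_card_filter (N : ℕ) :
    (A ∩ Set.Icc (-(N : ℤ)) N).ncard = #{y ∈ Ico (-(N : ℤ)) (-N + (2 * N + 1 : ℕ)) | y ∈ A} := by
  rw [← Set.ncard_coe_finset]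
  congr 1
  ext y
  simp only [Set.mem_inter_iff, Set.mem_Icc, coe_filter, mem_Ico, Set.mem_ofPred_eq]
  rw [and_comm]
  exact and_congr_left' (by constructor <;> intro <;> omega)

lemma tendsto_add_div_two_mul_add_one (c C : ℝ) :
    Tendsto (fun N : ℕ => c + C / (2 * (N : ℝ) + 1)) atTop (𝓝 c) := by
  have h : Tendsto (fun N : ℕ => 2 * (N : ℝ) + 1) atTop atTop :=
    tendsto_atTop_add_const_right _ _ (tendsto_natCast_atTop_atTop.const_mul_atTop two_pos)
  simpa using tendsto_const_nhds.add (h.const_div_atTop C)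

variable {A} {M K : ℕ} (hM : 0 < M)
include hM

lemma ncard_div_le_of_card_window_le (h : ∀ x, #{y ∈ Ico x (x + M) | y ∈ A} ≤ K) (N : ℕ) :
    ((A ∩ Set.Icc (-(N : ℤ)) N).ncard : ℝ) / (2 * N + 1) ≤ K / M + K / (2 * N + 1) := by
  have hcount : (M * (A ∩ Set.Icc (-(N : ℤ)) N).ncard : ℝ) ≤ (2 * N + 1 + M) * K := by
    rw [ncard_inter_Icc_eq_card_filter]
    exact_mod_cast mul_card_filter_Ico_le hM h _ _
  have hM' : (0 : ℝ) < M := by exact_mod_cast hM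
  rw [div_add_div _ _ hM'.ne' (by positivity), div_le_div_iff₀ (by positivity) (by positivity)]
  nlinarith

lemma le_ncard_div_of_le_card_window (h : ∀ x, K ≤ #{y ∈ Ico x (x + M) | y ∈ A}) (N : ℕ) :
    (K / M - K / (2 * N + 1) : ℝ) ≤ ((A ∩ Set.Icc (-(N : ℤ)) N).ncard : ℝ) / (2 * N + 1) := by
  have hcount : ((2 * N + 1) * K : ℝ) ≤ M * ((A ∩ Set.Icc (-(N : ℤ)) N).ncard + K) := by
    rw [ncard_inter_Icc_eq_card_filter]
    exact_mod_cast le_mul_card_filter_Ico hM h _ _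
  have hM' : (0 : ℝ) < M := by exact_mod_cast hM
  rw [div_sub_div _ _ hM'.ne' (by positivity), div_le_div_iff₀ (by positivity) (by positivity)]
  nlinarith

lemma density_le_of_card_window_le (h : ∀ x, #{y ∈ Ico x (x + M) | y ∈ A} ≤ K) :
    density A ≤ K / M := by
  have hlim := tendsto_add_div_two_mul_add_one (K / M : ℝ) K
  rw [← hlim.limsup_eq]
  exact limsup_le_limsup (.of_forall (ncard_div_le_of_card_window_le hM h))
    (isCoboundedUnder_le_of_le atTop fun _ => by positivity) hlim.isBoundedUnder_le

lemma density_eq_of_card_window_eq (h : ∀ x, #{y ∈ Ico x (x + M) | y ∈ A} = K) :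
    density A = K / M := by
  have hlo : Tendsto (fun N : ℕ => (K / M - K / (2 * N + 1) : ℝ)) atTop (𝓝 (K / M)) := by
    simpa [sub_eq_add_neg, neg_div] using tendsto_add_div_two_mul_add_one (K / M : ℝ) (-K)
  refine (tendsto_of_tendsto_of_tendsto_of_le_of_le hlo
    (tendsto_add_div_two_mul_add_one _ _)
    (le_ncard_div_of_le_card_window hM fun x => (h x).ge)
    (ncard_div_le_of_card_window_le hM fun x => (h x).le)).limsup_eq

end Density

lemma Int.ModEq.eq_of_abs_sub_lt {n a b : ℤ} (h : a ≡ b [ZMOD n]) (hab : |a - b| < n) : a = b :=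
  sub_eq_zero.mp (Int.eq_zero_of_abs_lt_dvd (Int.modEq_iff_dvd.mp h.symm) hab)

def oneMultiples (k ℓ : ℕ) : Finset ℕ := insert 1 ((Icc 1 ℓ).image fun j => j * k)

lemma mem_oneMultiples_of_dvd {k ℓ n : ℕ} (hkn : k ∣ n) (hn0 : n ≠ 0) (hn : n < k * (ℓ + 1)) :
    n ∈ oneMultiples k ℓ := by
  obtain ⟨j, rfl⟩ := hkn
  refine mem_insert_of_mem (mem_image.mpr ⟨j, mem_Icc.mpr ⟨?_, ?_⟩, mul_comm j k⟩)
  · exact Nat.pos_of_ne_zero (right_ne_zero_of_mul hn0)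
  · exact Nat.lt_succ_iff.mp (Nat.lt_of_mul_lt_mul_left hn)

lemma card_window_le_of_isIndepSet {k ℓ : ℕ} (hk : 0 < k) {A : Set ℤ} [DecidablePred (· ∈ A)]
    (hA : IsIndepSet (oneMultiples k ℓ) A) (x : ℤ) :
    #{y ∈ Ico x (x + (k * (ℓ + 1) : ℕ)) | y ∈ A} ≤ k := by
  have hk' : (0 : ℤ) < k := by exact_mod_cast hk
  calc #{y ∈ Ico x (x + (k * (ℓ + 1) : ℕ)) | y ∈ A}
      ≤ #(Ico 0 (k : ℤ)) := by
        refine card_le_card_of_injOn (· % (k : ℤ)) (fun y _ => ?_) fun y hy z hz hyz => ?_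
        · simpa using ⟨Int.emod_nonneg y hk'.ne', Int.emod_lt_of_pos y hk'⟩
        · simp only [coe_filter, mem_Ico, Set.mem_ofPred_eq] at hy hz
          by_contra hne
          refine hA y hy.2 z hz.2 hne (mem_oneMultiples_of_dvd ?_ (by omega) ?_)
          · exact Int.natCast_dvd.mp (Int.ModEq.dvd (Eq.symm hyz))
          · omega
    _ = k := by simp

lemma density_le_of_isIndepSet {k ℓ : ℕ} (hk : 0 < k) {A : Set ℤ}
    (hA : IsIndepSet (oneMultiples k ℓ) A) : density A ≤ k / (k * (ℓ + 1) : ℕ) := by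
  classical
  exact density_le_of_card_window_le (by positivity) (card_window_le_of_isIndepSet hk hA)

def zigzag (k ℓ : ℕ) : Set ℤ := {x | x / k ≡ x % k % 2 [ZMOD ℓ + 1]}

lemma zigzag_periodic (k ℓ : ℕ) : Function.Periodic (· ∈ zigzag k ℓ) (k * (ℓ + 1) : ℕ) := by
  obtain rfl | hk := eq_or_ne k 0
  · simp
  intro x
  simp only [zigzag, Set.mem_ofPred_eq, Nat.cast_mul, Nat.cast_add, Nat.cast_one,
    Int.add_mul_ediv_left _ _ (Int.natCast_ne_zero.mpr hk), Int.add_mul_emod_self_left]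
  exact propext ⟨Int.add_modEq_right.symm.trans, Int.add_modEq_right.trans⟩

lemma le_card_window_zigzag {k ℓ : ℕ} (hk : 0 < k) (hℓ : 1 ≤ ℓ) [DecidablePred (· ∈ zigzag k ℓ)]
    (x : ℤ) : k ≤ #{y ∈ Ico x (x + (k * (ℓ + 1) : ℕ)) | y ∈ zigzag k ℓ} := by
  have hk' : (0 : ℤ) < k := by exact_mod_cast hk
  rw [card_filter_Ico_of_periodic (by positivity) (zigzag_periodic k ℓ)]
  have hdecomp : ∀ r ∈ Ico 0 (k : ℤ), (r + k * (r % 2)) / k = r % 2 ∧ (r + k * (r % 2)) % k = r :=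
    fun r hr => (Int.ediv_emod_unique hk').mpr ⟨rfl, (mem_Ico.mp hr).1, (mem_Ico.mp hr).2⟩
  calc k = #(Ico 0 (k : ℤ)) := by simp
    _ ≤ _ := by
      refine card_le_card_of_injOn (fun r => r + k * (r % 2)) (fun r hr => ?_)
        fun r hr s hs hrs => ?_
      · have hr' := mem_Ico.mp hr
        rw [mem_coe, mem_filter, mem_Ico]
        simp only [zigzag, Set.mem_ofPred_eq, (hdecomp r hr).1, (hdecomp r hr).2]
        refine ⟨?_, rfl⟩
        push_cast
        rcases Int.emod_two_eq_zero_or_one r with h | h <;> rw [h] <;> constructor <;> nlinarith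
      · rw [← (hdecomp r hr).2, ← (hdecomp s hs).2]
        exact congrArg (· % (k : ℤ)) hrs

lemma add_one_notMem_zigzag {k ℓ : ℕ} (hk : 0 < k) (hℓ : 2 ≤ ℓ) {x : ℤ} (hx : x ∈ zigzag k ℓ) :
    x + 1 ∉ zigzag k ℓ := by
  have hk' : (0 : ℤ) < k := by exact_mod_cast hk
  have hr0 := Int.emod_nonneg x hk'.ne'
  have hrk := Int.emod_lt_of_pos x hk'
  have hx' := Int.emod_add_mul_ediv x k
  intro hx1
  simp only [zigzag, Set.mem_ofPred_eq] at hx hx1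
  rcases lt_or_eq_of_le (show x % k + 1 ≤ k by omega) with hlt | hwrap
  · obtain ⟨hq, hr⟩ := (Int.ediv_emod_unique hk' (a := x + 1) (q := x / k)).mpr
      ⟨by linarith, by omega, hlt⟩
    rw [hq, hr] at hx1
    have := (hx.symm.trans hx1).eq_of_abs_sub_lt (by rw [abs_lt]; omega)
    omega
  · obtain ⟨hq, hr⟩ := (Int.ediv_emod_unique hk' (a := x + 1) (q := x / k + 1)).mpr
      ⟨by linarith, le_refl 0, hk'⟩
    rw [hq, hr] at hx1
    have := ((Int.ModEq.add_right 1 hx).symm.trans hx1).eq_of_abs_sub_lt (by rw [abs_lt]; omega)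
    omega

lemma isIndepSet_zigzag {k ℓ : ℕ} (hk : 0 < k) (hℓ : 2 ≤ ℓ) :
    IsIndepSet (oneMultiples k ℓ) (zigzag k ℓ) := by
  have hk' : (0 : ℤ) < k := by exact_mod_cast hk
  intro y hy z hz hne hmem
  rcases mem_insert.mp hmem with hone | hmul
  · obtain h | h : y = z + 1 ∨ z = y + 1 := by omega
    · exact add_one_notMem_zigzag hk hℓ hz (h ▸ hy)
    · exact add_one_notMem_zigzag hk hℓ hy (h ▸ hz)
  · obtain ⟨j, hj, hjk⟩ := mem_image.mp hmul
    have hmod : z % k = y % k :=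
      Int.modEq_iff_dvd.mpr (Int.natCast_dvd.mpr ⟨j, by rw [← hjk, mul_comm]⟩)
    have hdiff : y - z = k * (y / k - z / k) := by
      linarith [Int.emod_add_mul_ediv y k, Int.emod_add_mul_ediv z k]
    have habs : (j * k : ℤ) = k * |y / k - z / k| := by
      have := congrArg abs hdiff
      rwa [abs_mul, abs_of_pos hk', Int.abs_eq_natAbs, ← hjk, Nat.cast_mul] at this
    have hj' : (j : ℤ) ≤ ℓ := by exact_mod_cast (mem_Icc.mp hj).2
    have hq : y / k = z / k := (hy.trans (hmod ▸ hz.symm)).eq_of_abs_sub_lt (by nlinarith)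
    apply hne
    rw [← Int.emod_add_mul_ediv y k, hq, ← hmod, Int.emod_add_mul_ediv]

lemma density_zigzag {k ℓ : ℕ} (hk : 0 < k) (hℓ : 2 ≤ ℓ) :
    density (zigzag k ℓ) = k / (k * (ℓ + 1) : ℕ) := by
  classical
  exact density_eq_of_card_window_eq (by positivity) fun x =>
    (card_window_le_of_isIndepSet hk (isIndepSet_zigzag hk hℓ) x).antisymm
      (le_card_window_zigzag hk (by omega) x)

/-- For `k, ℓ ≥ 2`, the independence ratio of `G({1, k, 2k, ..., ℓk})` is `1/(ℓ+1)`. -/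
theorem indRatio_one_multiples (k ℓ : ℕ) (hk : 2 ≤ k) (hℓ : 2 ≤ ℓ) :
    indRatio (insert 1 ((Finset.Icc 1 ℓ).image fun j => j * k)) = 1 / ((ℓ : ℝ) + 1) := by
  have hk0 : 0 < k := by omega
  have hratio : (k : ℝ) / (k * (ℓ + 1) : ℕ) = 1 / (ℓ + 1) := by
    push_cast
    field_simp
  rw [← hratio]
  refine IsGreatest.csSup_eq ⟨⟨zigzag k ℓ, isIndepSet_zigzag hk0 hℓ, density_zigzag hk0 hℓ⟩, ?_⟩
  rintro _ ⟨A, hA, rfl⟩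
  exact density_le_of_isIndepSet hk0 hA
end

section
/- Local Discharging Lemma: Let S be a finite nonempty set of positive integers, let a, b, t ≥ 1 and c ≥ 0 be integers, and let X be a nonempty periodic independent set in G(S) with period p; let x : ℤ → ℤ be the strictly increasing enumeration of X and let r = |X ∩ [0, p−1]| (so x_{i+r} = x_i + p for all i). Define the initial charge μ(i) = a(x_{i+1} − x_i) − b for each i ∈ ℤ. Suppose d : ℤ × ℤ → ℤ satisfies: d(i,j) = −d(j,i) for all i,j; there is an integer m ≥ 0 with d(i,j) = 0 whenever |i−j| > m; and d(i+r, j+r) = d(i,j) for all i,j. Define μ*(i) = μ(i) + Σ_{j∈ℤ} d(j,i) and ν*(j) = Σ_{i=j}^{j+t−1} μ*(i). Suppose d' : ℤ × ℤ → ℤ satisfies the same three conditions (antisymmetry, vanishing when |i−j| exceeds some fixed m', and invariance under shifting both arguments by r), and define ν'(j) = ν*(j) + Σ_{k∈ℤ} d'(k,j). If ν'(j) ≥ c for all j ∈ ℤ, then δ(X) ≤ at/(bt+c). -/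
/-!
Discharging moves charge between nearby indices without creating or destroying it, and all
charges involved are `r`-periodic, so the total charge over one period `[0, r)` is invariant.
Initially it is `∑ (a (x_{i+1} - x_i) - b) = a p - b r`; summing `t` consecutive block charges
into frames multiplies it by `t`. Since every frame finally carries at least `c`, we get
`r c ≤ t (a p - b r)`, i.e. `r / p ≤ a t / (b t + c)`, while a `p`-periodic set has density at
most `r / p`.
-/

open Filter

open Finset Function

theorem Int.sum_Ico_sub {M : Type*} [AddCommGroup M] (f : ℤ → M) {a b : ℤ} (hab : a ≤ b) :
    ∑ i ∈ Ico a b, (f (i + 1) - f i) = f b - f a := by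
  induction b, hab using Int.leInduction with
  | base => simp
  | succ b hab ih =>
    rw [← sum_Ico_add_eq_sum_Ico_add_one hab, ih]
    abel

namespace Function.Periodic

variable {M : Type*} {g : ℤ → M} {r : ℤ}

theorem sum_Ico_add_eq [AddCancelCommMonoid M] (hg : Periodic g r) (s : ℤ) :
    ∑ i ∈ Ico s (s + r), g i = ∑ i ∈ Ico 0 r, g i := by
  rcases lt_or_ge r 0 with hr | hr
  · simp [Ico_eq_empty_of_le, hr.le]
  have step (s : ℤ) : ∑ i ∈ Ico (s + 1) (s + 1 + r), g i = ∑ i ∈ Ico s (s + r), g i := by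
    apply add_left_cancel (a := g s)
    rw [← sum_insert (by simp), insert_Ico_add_one_left_eq_Ico (by omega),
      show s + 1 + r = s + r + 1 by ring, ← sum_Ico_add_eq_sum_Ico_add_one (by omega), hg s,
      add_comm]
  induction s using Int.induction_on with
  | zero => simp
  | succ k ih => rw [step, ih]
  | pred k ih => rw [← ih, ← step, sub_add_cancel]

theorem sum_Ico_add_mul_eq_nsmul [AddCancelCommMonoid M] (hg : Periodic g r) (hr : 0 ≤ r) (s : ℤ)
    (n : ℕ) : ∑ i ∈ Ico s (s + n * r), g i = n • ∑ i ∈ Ico 0 r, g i := by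
  induction n with
  | zero => simp
  | succ n ih =>
    have h₁ : s ≤ s + n * r := by nlinarith [Int.natCast_nonneg n]
    have h₂ : s + n * r ≤ s + (n + 1 : ℕ) * r := by push_cast; nlinarith
    rw [← Ico_union_Ico_eq_Ico h₁ h₂, sum_union (Ico_disjoint_Ico_consecutive _ _ _), ih,
      show s + (n + 1 : ℕ) * r = s + n * r + r by push_cast; ring, hg.sum_Ico_add_eq, succ_nsmul]

theorem sum_Ico_sum_Ico_add_eq_zsmul [AddCommGroup M] (hg : Periodic g r) {t : ℤ} (ht : 0 ≤ t) :
    ∑ j ∈ Ico 0 r, ∑ i ∈ Ico j (j + t), g i = t • ∑ i ∈ Ico 0 r, g i := by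
  have shift (a n : ℤ) : ∑ i ∈ Ico a (a + n), g i = ∑ k ∈ Ico 0 n, g (a + k) := by
    rw [sum_Ico_add, zero_add, add_comm]
  calc ∑ j ∈ Ico 0 r, ∑ i ∈ Ico j (j + t), g i
      = ∑ k ∈ Ico 0 t, ∑ j ∈ Ico k (k + r), g j := by
        simp_rw [shift]
        rw [sum_comm]
        simp only [add_comm]
    _ = t • ∑ i ∈ Ico 0 r, g i := by
        simp_rw [hg.sum_Ico_add_eq, sum_const, Int.card_Ico, sub_zero, ← natCast_zsmul,
          Int.toNat_of_nonneg ht]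

end Function.Periodic

section Discharging

variable {d : ℤ → ℤ → ℤ} {r m : ℤ}

theorem finsum_eq_sum_Icc_of_local (hloc : ∀ i j, m < |i - j| → d i j = 0) (i : ℤ) :
    ∑ᶠ j, d j i = ∑ k ∈ Icc (-m) m, d (i + k) i := by
  rw [← finsum_comp_equiv (Equiv.addLeft i)]
  apply finsum_eq_sum_of_support_subset
  intro k hk
  by_contra hk'
  refine hk (hloc _ _ ?_)
  simp only [coe_Icc, Set.mem_Icc, not_and_or, not_le] at hk'
  simp only [Equiv.coe_addLeft, add_sub_cancel_left, lt_abs]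
  omega

theorem periodic_finsum_of_shift (hloc : ∀ i j, m < |i - j| → d i j = 0)
    (hshift : ∀ i j, d (i + r) (j + r) = d i j) : Periodic (fun i ↦ ∑ᶠ j, d j i) r := by
  intro i
  simp only [finsum_eq_sum_Icc_of_local hloc, add_right_comm i r, hshift]

/-- Grouped by distance `k`, the charge `F k` moved within one period satisfies
`F (-k) = -F k` by antisymmetry and periodicity, so the contributions of `k` and `-k` cancel. -/
theorem sum_Ico_finsum_eq_zero (hanti : ∀ i j, d i j = -d j i)
    (hloc : ∀ i j, m < |i - j| → d i j = 0) (hshift : ∀ i j, d (i + r) (j + r) = d i j) :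
    ∑ i ∈ Ico 0 r, ∑ᶠ j, d j i = 0 := by
  set F : ℤ → ℤ := fun k ↦ ∑ i ∈ Ico 0 r, d (i + k) i
  have hF (k : ℤ) : F (-k) = -F k := by
    have hper : Periodic (fun i ↦ d (i - k) i) r := fun i ↦ by
      simp only [← sub_add_eq_add_sub, hshift]
    calc F (-k) = ∑ i ∈ Ico k (k + r), d (i - k) i := by
          simp only [F, hper.sum_Ico_add_eq, ← sub_eq_add_neg]
      _ = -F k := by
          rw [show Ico k (k + r) = Ico (0 + k) (r + k) by rw [zero_add, add_comm],
            ← sum_Ico_add' (fun i ↦ d (i - k) i), ← sum_neg_distrib]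
          exact sum_congr rfl fun i _ ↦ by rw [add_sub_cancel_right, hanti]
  have hsum : ∑ i ∈ Ico 0 r, ∑ᶠ j, d j i = ∑ k ∈ Icc (-m) m, F k := by
    simp_rw [finsum_eq_sum_Icc_of_local hloc]
    exact sum_comm
  have hodd : ∑ k ∈ Icc (-m) m, F k = ∑ k ∈ Icc (-m) m, F (-k) :=
    sum_nbij' (fun k ↦ -k) (fun k ↦ -k) (by simp; omega) (by simp; omega) (by simp) (by simp)
      (by simp)
  rw [hsum]
  simp only [hF, sum_neg_distrib] at hodd
  omega

theorem sum_Ico_add_finsum_eq (hanti : ∀ i j, d i j = -d j i)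
    (hloc : ∀ i j, m < |i - j| → d i j = 0) (hshift : ∀ i j, d (i + r) (j + r) = d i j)
    (f : ℤ → ℤ) : ∑ i ∈ Ico 0 r, (f i + ∑ᶠ j, d j i) = ∑ i ∈ Ico 0 r, f i := by
  rw [sum_add_distrib, sum_Ico_finsum_eq_zero hanti hloc hshift, add_zero]

end Discharging

theorem Set.ncard_inter_Ico_eq_sum (X : Set ℤ) [DecidablePred (· ∈ X)] (a b : ℤ) :
    (X ∩ Set.Ico a b).ncard = ∑ z ∈ Finset.Ico a b, if z ∈ X then 1 else 0 := by
  rw [← card_filter, ← Set.ncard_coe_finset, coe_filter]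
  congr 1
  ext z
  simp [and_comm]

theorem ncard_inter_Ico_add_mul_of_periodic {X : Set ℤ} {p : ℤ} (hp : 0 ≤ p)
    (hper : ∀ z, z + p ∈ X ↔ z ∈ X) (s : ℤ) (n : ℕ) :
    (X ∩ Set.Ico s (s + n * p)).ncard = n * (X ∩ Set.Ico 0 p).ncard := by
  classical
  have hg : Periodic (fun z ↦ if z ∈ X then 1 else 0 : ℤ → ℕ) p := fun z ↦ by simp only [hper]
  simp only [Set.ncard_inter_Ico_eq_sum, hg.sum_Ico_add_mul_eq_nsmul hp, smul_eq_mul]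

theorem density_le_of_periodic {X : Set ℤ} {p : ℤ} (hp : 0 < p)
    (hper : ∀ z, z + p ∈ X ↔ z ∈ X) :
    density X ≤ ((X ∩ Set.Ico 0 p).ncard : ℝ) / p := by
  set R : ℝ := ((X ∩ Set.Ico 0 p).ncard : ℝ)
  have hpR : (0 : ℝ) < p := Int.cast_pos.mpr hp
  have hbound (N : ℕ) :
      ((X ∩ Set.Icc (-(N : ℤ)) N).ncard : ℝ) / (2 * N + 1) ≤ R / p + R / (2 * N + 1) := by
    set n := ⌈(2 * N + 1 : ℝ) / p⌉₊
    have hn : (2 * N + 1 : ℝ) ≤ n * p := (div_le_iff₀ hpR).mp (Nat.le_ceil _)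
    have hcover : Set.Icc (-(N : ℤ)) N ⊆ Set.Ico (-N) (-N + n * p) := by
      have : 2 * (N : ℤ) + 1 ≤ n * p := by exact_mod_cast hn
      intro z ⟨h₁, h₂⟩
      exact ⟨h₁, by omega⟩
    have hcount : ((X ∩ Set.Icc (-(N : ℤ)) N).ncard : ℝ) ≤ n * R := by
      rw [← Nat.cast_mul, ← ncard_inter_Ico_add_mul_of_periodic hp.le hper, Nat.cast_le]
      exact Set.ncard_le_ncard (Set.inter_subset_inter_right X hcover)
        ((Set.finite_Ico _ _).subset Set.inter_subset_right)
    have hn' : (n : ℝ) < (2 * N + 1) / p + 1 := Nat.ceil_lt_add_one (by positivity)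
    rw [div_le_iff₀ (by positivity)]
    calc _ ≤ n * R := hcount
      _ ≤ ((2 * N + 1) / p + 1) * R := by gcongr
      _ = _ := by field_simp
  have hlim : Tendsto (fun N : ℕ ↦ R / p + R / (2 * N + 1)) atTop (nhds (R / p)) := by
    simpa using tendsto_const_nhds.add (tendsto_const_nhds.div_atTop
      (tendsto_atTop_add_const_right _ 1
        ((tendsto_natCast_atTop_atTop (R := ℝ)).const_mul_atTop two_pos)))
  refine (limsup_le_limsup (Eventually.of_forall hbound) ?_ hlim.isBoundedUnder_le).trans_eq
    hlim.limsup_eq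
  exact isCoboundedUnder_le_of_le atTop fun N ↦ by positivity

theorem local_discharging_general
    (a b t c : ℤ) (hb : 1 ≤ b) (ht : 1 ≤ t) (hc : 0 ≤ c)
    (X : Set ℤ)
    (p : ℤ) (hp : 0 < p) (hper : ∀ z : ℤ, z + p ∈ X ↔ z ∈ X)
    (x : ℤ → ℤ)
    (r : ℤ) (hr : r = ((X ∩ Set.Ico (0 : ℤ) p).ncard : ℤ))
    (hxr : ∀ i : ℤ, x (i + r) = x i + p)
    (μ : ℤ → ℤ) (hμ : ∀ i : ℤ, μ i = a * (x (i + 1) - x i) - b)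
    (d : ℤ → ℤ → ℤ)
    (hd_anti : ∀ i j : ℤ, d i j = - d j i)
    (m : ℤ) (hd_local : ∀ i j : ℤ, m < |i - j| → d i j = 0)
    (hd_shift : ∀ i j : ℤ, d (i + r) (j + r) = d i j)
    (μs : ℤ → ℤ) (hμs : ∀ i : ℤ, μs i = μ i + ∑ᶠ j : ℤ, d j i)
    (νs : ℤ → ℤ) (hνs : ∀ j : ℤ, νs j = ∑ i ∈ Finset.Ico j (j + t), μs i)
    (d' : ℤ → ℤ → ℤ)
    (hd'_anti : ∀ i j : ℤ, d' i j = - d' j i)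
    (m' : ℤ) (hd'_local : ∀ i j : ℤ, m' < |i - j| → d' i j = 0)
    (hd'_shift : ∀ i j : ℤ, d' (i + r) (j + r) = d' i j)
    (ν' : ℤ → ℤ) (hν' : ∀ j : ℤ, ν' j = νs j + ∑ᶠ k : ℤ, d' k j)
    (hcharge : ∀ j : ℤ, c ≤ ν' j) :
    density X ≤ ((a : ℝ) * (t : ℝ)) / ((b : ℝ) * (t : ℝ) + (c : ℝ)) := by
  have hr0 : 0 ≤ r := hr ▸ Int.natCast_nonneg _
  have hμper : Periodic μ r := fun i ↦ by rw [hμ, hμ, add_right_comm, hxr, hxr]; ring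
  have hμsper : Periodic μs r := fun i ↦ by
    rw [hμs, hμs, hμper]
    exact congrArg (μ i + ·) (periodic_finsum_of_shift hd_local hd_shift i)
  have hμsum : ∑ i ∈ Ico 0 r, μ i = a * p - b * r := by
    simp only [hμ, sum_sub_distrib, ← mul_sum, Int.sum_Ico_sub x hr0, sum_const, Int.card_Ico,
      sub_zero, nsmul_eq_mul, Int.toNat_of_nonneg hr0]
    have hblock : x r = x 0 + p := by simpa using hxr 0
    linear_combination a * hblock
  have hν'sum : ∑ j ∈ Ico 0 r, ν' j = t * (a * p - b * r) := by
    simp only [hν', sum_Ico_add_finsum_eq hd'_anti hd'_local hd'_shift, hνs]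
    rw [hμsper.sum_Ico_sum_Ico_add_eq_zsmul (by omega), smul_eq_mul]
    simp only [hμs, sum_Ico_add_finsum_eq hd_anti hd_local hd_shift, hμsum]
  have hcount : r * (b * t + c) ≤ a * t * p := by
    have := sum_le_sum fun j (_ : j ∈ Ico 0 r) ↦ hcharge j
    rw [hν'sum, sum_const, Int.card_Ico, sub_zero, nsmul_eq_mul, Int.toNat_of_nonneg hr0] at this
    linarith
  have hdensity : density X ≤ (r : ℝ) / p := by
    rw [hr]
    exact_mod_cast density_le_of_periodic hp hper
  refine hdensity.trans ?_
  rw [div_le_div_iff₀ (by exact_mod_cast hp) (by positivity)]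
  have hcountR : (r : ℝ) * (b * t + c) ≤ a * t * p := by exact_mod_cast hcount
  linarith

/-- The Local Discharging Lemma: if a two-stage local discharging process on the blocks
and `t`-frames of a periodic independent set `X` in `G(S)` leaves every frame with charge
at least `c`, then the density of `X` is at most `at/(bt+c)`. -/
theorem local_discharging
    (S : Finset ℕ) (hS : S.Nonempty) (hSpos : ∀ n ∈ S, 0 < n)
    (a b t c : ℤ) (ha : 1 ≤ a) (hb : 1 ≤ b) (ht : 1 ≤ t) (hc : 0 ≤ c)
    (X : Set ℤ) (hXne : X.Nonempty) (hXind : IsIndepSet S X)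
    (p : ℤ) (hp : 0 < p) (hper : ∀ z : ℤ, z + p ∈ X ↔ z ∈ X)
    (x : ℤ → ℤ) (hmono : StrictMono x) (hrange : Set.range x = X)
    (r : ℤ) (hr : r = ((X ∩ Set.Ico (0 : ℤ) p).ncard : ℤ))
    (hxr : ∀ i : ℤ, x (i + r) = x i + p)
    (μ : ℤ → ℤ) (hμ : ∀ i : ℤ, μ i = a * (x (i + 1) - x i) - b)
    (d : ℤ → ℤ → ℤ)
    (hd_anti : ∀ i j : ℤ, d i j = - d j i)
    (m : ℤ) (hm : 0 ≤ m) (hd_local : ∀ i j : ℤ, m < |i - j| → d i j = 0)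
    (hd_shift : ∀ i j : ℤ, d (i + r) (j + r) = d i j)
    (μs : ℤ → ℤ) (hμs : ∀ i : ℤ, μs i = μ i + ∑ᶠ j : ℤ, d j i)
    (νs : ℤ → ℤ) (hνs : ∀ j : ℤ, νs j = ∑ i ∈ Finset.Ico j (j + t), μs i)
    (d' : ℤ → ℤ → ℤ)
    (hd'_anti : ∀ i j : ℤ, d' i j = - d' j i)
    (m' : ℤ) (hm' : 0 ≤ m') (hd'_local : ∀ i j : ℤ, m' < |i - j| → d' i j = 0)
    (hd'_shift : ∀ i j : ℤ, d' (i + r) (j + r) = d' i j)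
    (ν' : ℤ → ℤ) (hν' : ∀ j : ℤ, ν' j = νs j + ∑ᶠ k : ℤ, d' k j)
    (hcharge : ∀ j : ℤ, c ≤ ν' j) :
    density X ≤ ((a : ℝ) * (t : ℝ)) / ((b : ℝ) * (t : ℝ) + (c : ℝ)) :=
  local_discharging_general a b t c hb ht hc X p hp hper x r hr hxr μ hμ d hd_anti m hd_local
    hd_shift μs hμs νs hνs d' hd'_anti m' hd'_local hd'_shift ν' hν' hcharge
end

section
/- Let ℓ ≥ 2 and k > ℓ be integers. Then ᾱ({1, 2, …, ℓ−1, k}) = 1/ℓ if k is not divisible by ℓ, and ᾱ({1, 2, …, ℓ−1, k}) = k/(ℓ(k+1)) if k is divisible by ℓ. -/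
open Filter

/-!
Distances `1, …, ℓ-1` being forbidden, an independent set meets every window of `ℓ` consecutive
integers at most once, so its density is at most `1/ℓ`; when `ℓ ∤ k` the multiples of `ℓ`
attain this. When `k = ℓ m`, a window of `k + 1` consecutive integers cannot contain both of its
endpoints, so the set meets it inside a window of length `m ℓ`, hence at most `m` times: the
density is at most `m/(k+1)`. This is attained by the integers whose residue mod `k + 1` is one
of `0, ℓ, …, (m-1)ℓ`: a forbidden difference `s ∈ {1, …, ℓ-1}` or `±k ≡ ∓1` would be congruent
mod `k + 1` to a difference of two such residues, a multiple of `ℓ` too small to differ from `s`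
by a nonzero multiple of `k + 1`.
-/

open Set Topology

lemma ncard_inter_Ico_add_mul (A : Set ℤ) (p : ℕ) (x : ℤ) (j : ℕ) :
    (A ∩ Ico x (x + j * p)).ncard =
      ∑ i ∈ Finset.range j, (A ∩ Ico (x + i * p) (x + i * p + p)).ncard := by
  induction j with
  | zero => simp
  | succ j ih =>
    have hsplit : Ico x (x + (j + 1 : ℕ) * p) =
        Ico x (x + j * p) ∪ Ico (x + j * p) (x + j * p + p) := by
      rw [Ico_union_Ico_eq_Ico (le_add_of_nonneg_right (by positivity)) (by omega)]
      push_cast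
      ring_nf
    rw [hsplit, inter_union_distrib_left, ncard_union_eq ?_ ((finite_Ico _ _).inter_of_right _)
      ((finite_Ico _ _).inter_of_right _), ih, Finset.sum_range_succ]
    exact Ico_disjoint_Ico_same.mono inter_subset_right inter_subset_right

section Windows

variable {A : Set ℤ} {p c : ℕ}

lemma ncard_inter_Ico_add_mul_le (hw : ∀ y : ℤ, (A ∩ Ico y (y + p)).ncard ≤ c) (x : ℤ) (j : ℕ) :
    (A ∩ Ico x (x + j * p)).ncard ≤ j * c := by
  rw [ncard_inter_Ico_add_mul]
  exact (Finset.sum_le_card_nsmul _ _ c fun i _ => hw _).trans_eq (by simp)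

lemma ncard_inter_Ico_add_mul_eq (hw : ∀ y : ℤ, (A ∩ Ico y (y + p)).ncard = c) (x : ℤ) (j : ℕ) :
    (A ∩ Ico x (x + j * p)).ncard = j * c := by
  simp [ncard_inter_Ico_add_mul, hw]

lemma ncard_inter_Ico_le_of_forall_window (hp : 0 < p)
    (hw : ∀ y : ℤ, (A ∩ Ico y (y + p)).ncard ≤ c) (x : ℤ) (n : ℕ) :
    ((A ∩ Ico x (x + n)).ncard : ℝ) ≤ ((n : ℝ) / p + 1) * c := by
  have hcover : n ≤ (n / p + 1) * p := by
    have := Nat.lt_div_mul_add (a := n) hp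
    rw [add_mul, one_mul]; omega
  have hcount : (A ∩ Ico x (x + n)).ncard ≤ (n / p + 1) * c := by
    refine (ncard_le_ncard (inter_subset_inter_right _ (Ico_subset_Ico_right ?_))
      ((finite_Ico _ _).inter_of_right _)).trans (ncard_inter_Ico_add_mul_le hw x _)
    have : (n : ℤ) ≤ ((n / p + 1 : ℕ) : ℤ) * p := by exact_mod_cast hcover
    linarith
  calc ((A ∩ Ico x (x + n)).ncard : ℝ) ≤ ((n / p : ℕ) + 1 : ℝ) * c := by exact_mod_cast hcount
    _ ≤ ((n : ℝ) / p + 1) * c := by gcongr; exact Nat.cast_div_le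

lemma le_ncard_inter_Ico_of_forall_window (hp : 0 < p)
    (hw : ∀ y : ℤ, (A ∩ Ico y (y + p)).ncard = c) (x : ℤ) (n : ℕ) :
    ((n : ℝ) / p - 1) * c ≤ (A ∩ Ico x (x + n)).ncard := by
  have hcount : n / p * c ≤ (A ∩ Ico x (x + n)).ncard := by
    rw [← ncard_inter_Ico_add_mul_eq hw x]
    refine ncard_le_ncard (inter_subset_inter_right _ (Ico_subset_Ico_right ?_))
      ((finite_Ico _ _).inter_of_right _)
    have : ((n / p : ℕ) : ℤ) * p ≤ n := by exact_mod_cast Nat.div_mul_le_self n p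
    linarith
  have hfloor : (n : ℝ) / p - 1 ≤ (n / p : ℕ) := by
    have : (n : ℝ) < (n / p : ℕ) * p + p := by exact_mod_cast Nat.lt_div_mul_add hp
    rw [sub_le_iff_le_add, div_le_iff₀ (by exact_mod_cast hp)]
    linarith
  calc ((n : ℝ) / p - 1) * c ≤ (n / p : ℕ) * c := by gcongr
    _ ≤ (A ∩ Ico x (x + n)).ncard := by exact_mod_cast hcount

lemma Icc_neg_natCast_eq_Ico (N : ℕ) :
    Icc (-(N : ℤ)) N = Ico (-(N : ℤ)) (-(N : ℤ) + (2 * N + 1 : ℕ)) := by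
  ext x
  simp only [mem_Icc, mem_Ico]
  omega

lemma tendsto_div_two_mul_add_one_atTop (c : ℝ) :
    Tendsto (fun N : ℕ => c / (2 * (N : ℝ) + 1)) atTop (𝓝 0) :=
  tendsto_const_nhds.div_atTop <| tendsto_atTop_add_const_right _ _ <|
    tendsto_natCast_atTop_atTop.const_mul_atTop two_pos

lemma ncard_inter_Icc_div_le_of_forall_window (hp : 0 < p)
    (hw : ∀ y : ℤ, (A ∩ Ico y (y + p)).ncard ≤ c) (N : ℕ) :
    ((A ∩ Icc (-(N : ℤ)) N).ncard : ℝ) / (2 * N + 1) ≤ c / p + c / (2 * N + 1) := by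
  rw [div_le_iff₀ (by positivity), Icc_neg_natCast_eq_Ico]
  refine (ncard_inter_Ico_le_of_forall_window hp hw _ _).trans_eq ?_
  push_cast
  field_simp

lemma le_ncard_inter_Icc_div_of_forall_window (hp : 0 < p)
    (hw : ∀ y : ℤ, (A ∩ Ico y (y + p)).ncard = c) (N : ℕ) :
    (c : ℝ) / p - c / (2 * N + 1) ≤ ((A ∩ Icc (-(N : ℤ)) N).ncard : ℝ) / (2 * N + 1) := by
  rw [le_div_iff₀ (by positivity), Icc_neg_natCast_eq_Ico]
  refine le_of_eq_of_le ?_ (le_ncard_inter_Ico_of_forall_window hp hw _ _)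
  push_cast
  field_simp

lemma density_le_of_forall_window (hp : 0 < p)
    (hw : ∀ y : ℤ, (A ∩ Ico y (y + p)).ncard ≤ c) : density A ≤ c / p := by
  have hlim : Tendsto (fun N : ℕ => (c : ℝ) / p + c / (2 * N + 1)) atTop (𝓝 (c / p)) := by
    simpa using tendsto_const_nhds.add (tendsto_div_two_mul_add_one_atTop (c : ℝ))
  rw [← hlim.limsup_eq]
  exact limsup_le_limsup (.of_forall (ncard_inter_Icc_div_le_of_forall_window hp hw))
    (isCoboundedUnder_le_of_le atTop fun N => by positivity) hlim.isBoundedUnder_le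

lemma density_eq_of_forall_window (hp : 0 < p)
    (hw : ∀ y : ℤ, (A ∩ Ico y (y + p)).ncard = c) : density A = c / p := by
  refine Tendsto.limsup_eq (tendsto_of_tendsto_of_tendsto_of_le_of_le ?_ ?_
    (le_ncard_inter_Icc_div_of_forall_window hp hw)
    (ncard_inter_Icc_div_le_of_forall_window hp fun y => (hw y).le))
  · simpa using tendsto_const_nhds.sub (tendsto_div_two_mul_add_one_atTop (c : ℝ))
  · simpa using tendsto_const_nhds.add (tendsto_div_two_mul_add_one_atTop (c : ℝ))

end Windows

lemma ncard_setOf_emod_mem_inter_Ico {p : ℤ} (hp : 0 < p) {R : Set ℤ} (hR : R ⊆ Ico 0 p)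
    (y : ℤ) : ({x | x % p ∈ R} ∩ Ico y (y + p)).ncard = R.ncard := by
  refine ncard_congr (fun x _ => x % p) (fun x hx => hx.1) ?_ ?_
  · rintro x x' ⟨-, hx⟩ ⟨-, hx'⟩ (hxx' : x ≡ x' [ZMOD p])
    simp only [mem_Ico] at hx hx'
    have := Int.eq_zero_of_abs_lt_dvd hxx'.dvd (by rw [abs_lt]; omega)
    omega
  · intro r hr
    have hr' := hR hr
    simp only [mem_Ico] at hr'
    have h0 := Int.emod_nonneg (r - y) hp.ne'
    have h1 := Int.emod_lt_of_pos (r - y) hp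
    have hmod : (y + (r - y) % p) % p = r := by
      rw [Int.add_emod_emod, add_sub_cancel, Int.emod_eq_of_lt hr'.1 hr'.2]
    exact ⟨y + (r - y) % p, ⟨show _ ∈ R by rwa [hmod], by simp only [mem_Ico]; omega⟩, hmod⟩

lemma density_setOf_dvd {ℓ : ℕ} (hℓ : 0 < ℓ) : density {x : ℤ | (ℓ : ℤ) ∣ x} = 1 / ℓ := by
  have hset : {x : ℤ | (ℓ : ℤ) ∣ x} = {x | x % (ℓ : ℤ) ∈ ({0} : Set ℤ)} := by
    ext x
    exact Int.dvd_iff_emod_eq_zero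
  refine (density_eq_of_forall_window (c := 1) hℓ fun y => ?_).trans (by simp)
  rw [hset, ncard_setOf_emod_mem_inter_Ico (by omega) (by simpa using hℓ), ncard_singleton]

def multiplesBlockSet (ℓ m : ℕ) : Set ℤ :=
  {x | x % (ℓ * m + 1 : ℤ) ∈ (fun j : ℤ => ℓ * j) '' Ico 0 (m : ℤ)}

lemma density_multiplesBlockSet {ℓ : ℕ} (hℓ : 0 < ℓ) (m : ℕ) :
    density (multiplesBlockSet ℓ m) = m / (ℓ * m + 1 : ℕ) := by
  have hR : (fun j : ℤ => ℓ * j) '' Ico 0 (m : ℤ) ⊆ Ico 0 (ℓ * m + 1 : ℤ) := by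
    rintro _ ⟨j, hj, rfl⟩
    simp only [mem_Ico] at hj ⊢
    constructor <;> nlinarith
  have hcard : ((fun j : ℤ => ℓ * j) '' Ico 0 (m : ℤ)).ncard = m := by
    rw [ncard_image_of_injective _ (mul_right_injective₀ (by positivity)), ← Finset.coe_Ico,
      ncard_coe_finset, Int.card_Ico, sub_zero, Int.toNat_natCast]
  refine density_eq_of_forall_window (by positivity) fun y => ?_
  push_cast
  exact (ncard_setOf_emod_mem_inter_Ico (by positivity) hR y).trans hcard

lemma not_dvd_sub_sub_of_mem_multiplesBlockSet {ℓ m : ℕ} {a b s : ℤ}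
    (ha : a ∈ multiplesBlockSet ℓ m) (hb : b ∈ multiplesBlockSet ℓ m) (hs : s ≠ 0)
    (hsℓ : |s| < ℓ) : ¬ (ℓ * m + 1 : ℤ) ∣ a - b - s := by
  obtain ⟨i, hi, hai⟩ := ha
  obtain ⟨j, hj, hbj⟩ := hb
  simp only [mem_Ico] at hi hj hai hbj
  intro hdvd
  have hres : (ℓ * m + 1 : ℤ) ∣ a - b - (ℓ * i - ℓ * j) := by
    rw [hai, hbj]
    exact ((Int.mod_modEq a _).sub (Int.mod_modEq b _)).dvd
  have hsij : s = ℓ * (i - j) := by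
    have hi' : (ℓ : ℤ) * i + ℓ ≤ ℓ * m := by nlinarith
    have hj' : (ℓ : ℤ) * j + ℓ ≤ ℓ * m := by nlinarith
    have hi0 : 0 ≤ (ℓ : ℤ) * i := mul_nonneg (by positivity) hi.1
    have hj0 : 0 ≤ (ℓ : ℤ) * j := mul_nonneg (by positivity) hj.1
    rw [abs_lt] at hsℓ
    have := Int.eq_zero_of_abs_lt_dvd (dvd_sub hres hdvd)
      (by rw [abs_lt]; constructor <;> linarith)
    linarith
  exact hs (Int.eq_zero_of_abs_lt_dvd ⟨i - j, hsij⟩ hsℓ)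

lemma isIndepSet_multiplesBlockSet {ℓ : ℕ} (hℓ : 2 ≤ ℓ) (m : ℕ) :
    IsIndepSet (insert (ℓ * m) (Finset.Icc 1 (ℓ - 1))) (multiplesBlockSet ℓ m) := by
  intro a ha b hb hab hS
  rw [Finset.mem_insert, Finset.mem_Icc] at hS
  rcases hS with hk | hsmall
  · rcases Int.natAbs_eq (a - b) with h | h <;> rw [hk] at h <;> push_cast at h
    · refine not_dvd_sub_sub_of_mem_multiplesBlockSet ha hb (s := -1) (by norm_num)
        (by simp; omega) ⟨1, by rw [h]; ring⟩
    · refine not_dvd_sub_sub_of_mem_multiplesBlockSet ha hb (s := 1) (by norm_num)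
        (by simp; omega) ⟨-1, by rw [h]; ring⟩
  · refine not_dvd_sub_sub_of_mem_multiplesBlockSet ha hb (s := a - b) (sub_ne_zero.2 hab)
      ?_ (by simp)
    rw [Int.abs_eq_natAbs]
    omega

lemma isIndepSet_setOf_dvd {S : Finset ℕ} {ℓ : ℕ} (hS : ∀ s ∈ S, ¬ ℓ ∣ s) :
    IsIndepSet S {x : ℤ | (ℓ : ℤ) ∣ x} :=
  fun _ ha _ hb _ hab => hS _ hab (Int.natCast_dvd.1 (dvd_sub ha hb))

namespace IsIndepSet

variable {S : Finset ℕ} {A : Set ℤ} {ℓ : ℕ}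

lemma ncard_inter_Ico_le_one (hS : Finset.Icc 1 (ℓ - 1) ⊆ S) (hA : IsIndepSet S A) (y : ℤ) :
    (A ∩ Ico y (y + ℓ)).ncard ≤ 1 := by
  rw [ncard_le_one ((finite_Ico _ _).inter_of_right _)]
  rintro a ⟨haA, ha⟩ b ⟨hbA, hb⟩
  by_contra hab
  simp only [mem_Ico] at ha hb
  exact hA a haA b hbA hab (hS (Finset.mem_Icc.2 (by omega)))

lemma ncard_inter_Ico_le {m : ℕ} (hS : Finset.Icc 1 (ℓ - 1) ⊆ S) (hk : ℓ * m ∈ S)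
    (hkpos : 0 < ℓ * m) (hA : IsIndepSet S A) (y : ℤ) :
    (A ∩ Ico y (y + (ℓ * m + 1 : ℕ))).ncard ≤ m := by
  obtain ⟨k, hkm⟩ : ∃ k, ℓ * m = k := ⟨_, rfl⟩
  rw [hkm] at hk hkpos ⊢
  have hshort (z : ℤ) : (A ∩ Ico z (z + k)).ncard ≤ m := by
    have := ncard_inter_Ico_add_mul_le (ncard_inter_Ico_le_one hS hA) z m
    rwa [show (m : ℤ) * ℓ = k by rw [← hkm]; push_cast; ring, mul_one] at this
  by_cases hlast : y + k ∈ A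
  · have hfirst : y ∉ A := fun hy => hA _ hlast _ hy (by omega) (by simpa using hk)
    refine (ncard_le_ncard ?_ ((finite_Ico _ _).inter_of_right _)).trans (hshort (y + 1))
    rintro x ⟨hxA, hx⟩
    have : x ≠ y := by rintro rfl; exact hfirst hxA
    simp only [mem_Ico] at hx ⊢
    push_cast at hx
    exact ⟨hxA, by omega, by omega⟩
  · refine (ncard_le_ncard ?_ ((finite_Ico _ _).inter_of_right _)).trans (hshort y)
    rintro x ⟨hxA, hx⟩
    have : x ≠ y + k := by rintro rfl; exact hlast hxA
    simp only [mem_Ico] at hx ⊢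
    push_cast at hx
    exact ⟨hxA, by omega, by omega⟩

lemma density_le_one_div (hS : Finset.Icc 1 (ℓ - 1) ⊆ S) (hℓ : 0 < ℓ) (hA : IsIndepSet S A) :
    density A ≤ 1 / ℓ := by
  simpa using density_le_of_forall_window hℓ (hA.ncard_inter_Ico_le_one hS)

lemma density_le_s9 {m : ℕ} (hS : Finset.Icc 1 (ℓ - 1) ⊆ S) (hk : ℓ * m ∈ S) (hkpos : 0 < ℓ * m)
    (hA : IsIndepSet S A) : density A ≤ m / (ℓ * m + 1 : ℕ) :=
  density_le_of_forall_window (Nat.succ_pos _) (hA.ncard_inter_Ico_le hS hk hkpos)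

end IsIndepSet

lemma indRatio_eq_of_isIndepSet {S : Finset ℕ} {A : Set ℤ} {d : ℝ} (hA : IsIndepSet S A)
    (hd : density A = d) (hle : ∀ B, IsIndepSet S B → density B ≤ d) : indRatio S = d :=
  IsGreatest.csSup_eq ⟨⟨A, hA, hd⟩, by rintro _ ⟨B, hB, rfl⟩; exact hle B hB⟩

/-- The independence ratio of `G({1, ..., ℓ-1, k})` for `k > ℓ ≥ 2`. -/
theorem indRatio_interval_and_k (ℓ k : ℕ) (hℓ : 2 ≤ ℓ) (hk : ℓ < k) :
    (¬ ℓ ∣ k → indRatio (insert k (Finset.Icc 1 (ℓ - 1))) = 1 / (ℓ : ℝ)) ∧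
    (ℓ ∣ k → indRatio (insert k (Finset.Icc 1 (ℓ - 1))) = (k : ℝ) / ((ℓ : ℝ) * ((k : ℝ) + 1))) := by
  refine ⟨fun hndvd => ?_, ?_⟩
  · have hS : ∀ s ∈ insert k (Finset.Icc 1 (ℓ - 1)), ¬ ℓ ∣ s := by
      intro s hs hdvd
      rcases Finset.mem_insert.1 hs with rfl | hs
      · exact hndvd hdvd
      · have := Nat.le_of_dvd (Finset.mem_Icc.1 hs).1 hdvd
        have := (Finset.mem_Icc.1 hs).2
        omega
    exact indRatio_eq_of_isIndepSet (isIndepSet_setOf_dvd hS) (density_setOf_dvd (by omega))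
      fun A hA => hA.density_le_one_div (Finset.subset_insert _ _) (by omega)
  · rintro ⟨m, rfl⟩
    have hval : (m : ℝ) / (ℓ * m + 1 : ℕ) = (ℓ * m : ℕ) / (ℓ * ((ℓ * m : ℕ) + 1)) := by
      push_cast
      field_simp
    rw [← hval]
    exact indRatio_eq_of_isIndepSet (isIndepSet_multiplesBlockSet hℓ m)
      (density_multiplesBlockSet (by omega) m) fun A hA =>
        hA.density_le_s9 (Finset.subset_insert _ _) (Finset.mem_insert_self _ _) (by omega)
end

section
/- For every fixed integer i ≥ 1, the limit as k → ∞ of ᾱ({1, 2i+1, 2k}) equals 1/2. -/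
open Filter

/-! If `1 ∈ S`, an independent set of `G(S)` contains no two consecutive integers, so `ᾱ(S) ≤ 1/2`.
Conversely, put `q = 2k + 2i + 1` and let `A` be the set of integers whose residue mod `q` is one
of `0, 2, …, 2k - 2`; its density is `k / q → 1/2`. If two elements of `A`, with residues `r` and
`s`, differ by `d ∈ {1, 2i + 1, 2k}`, then `r - s ∈ {d, d - q}`. But `r - s` is even and lies
strictly between `-2k` and `2k`, whereas `1`, `2i + 1` and `2k - q = -(2i + 1)` are odd and
`1 - q = -(2k + 2i)`, `2i + 1 - q = -2k` and `2k` lie outside that range. -/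

open Finset Topology

theorem Int.ncard_Icc (a b : ℤ) : (Set.Icc a b).ncard = (b + 1 - a).toNat := by
  rw [← Finset.coe_Icc, Set.ncard_coe_finset, Int.card_Icc]

noncomputable def densityRatio (A : Set ℤ) (N : ℕ) : ℝ :=
  ((A ∩ Set.Icc (-(N : ℤ)) (N : ℤ)).ncard : ℝ) / (2 * (N : ℝ) + 1)

section DensityRatio

variable (A : Set ℤ)

theorem ncard_inter_Icc_le (N : ℕ) : (A ∩ Set.Icc (-(N : ℤ)) N).ncard ≤ 2 * N + 1 := by
  have h := Set.ncard_le_ncard (Set.inter_subset_right (s := A)) (Set.finite_Icc (-(N : ℤ)) N)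
  rw [Int.ncard_Icc] at h
  omega

theorem densityRatio_nonneg (N : ℕ) : 0 ≤ densityRatio A N := by
  unfold densityRatio; positivity

theorem densityRatio_le_one (N : ℕ) : densityRatio A N ≤ 1 := by
  rw [densityRatio, div_le_one (by positivity)]
  exact_mod_cast ncard_inter_Icc_le A N

theorem isBoundedUnder_densityRatio (l : Filter ℕ) :
    l.IsBoundedUnder (· ≤ ·) (densityRatio A) :=
  isBoundedUnder_of ⟨1, densityRatio_le_one A⟩

theorem isCoboundedUnder_densityRatio (l : Filter ℕ) [l.NeBot] :
    l.IsCoboundedUnder (· ≤ ·) (densityRatio A) :=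
  isCoboundedUnder_le_of_le l (densityRatio_nonneg A)

variable {A}

theorem density_le_of_tendsto {g : ℕ → ℝ} {L : ℝ} (hg : Tendsto g atTop (𝓝 L))
    (hle : ∀ N, densityRatio A N ≤ g N) : density A ≤ L :=
  (limsup_le_limsup (Eventually.of_forall hle) (isCoboundedUnder_densityRatio A _)
    hg.isBoundedUnder_le).trans hg.limsup_eq.le

theorem le_density_of_tendsto {u : ℕ → ℕ} {g : ℕ → ℝ} {L : ℝ} (hu : Tendsto u atTop atTop)
    (hg : Tendsto g atTop (𝓝 L)) (hle : ∀ M, g M ≤ densityRatio A (u M)) : L ≤ density A :=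
  calc L = limsup g atTop := hg.limsup_eq.symm
    _ ≤ limsup (densityRatio A ∘ u) atTop :=
      limsup_le_limsup (Eventually.of_forall hle) hg.isCoboundedUnder_le
        (isBoundedUnder_of ⟨1, fun M => densityRatio_le_one A (u M)⟩)
    _ ≤ density A := hu.limsup_comp_le_limsup (isCoboundedUnder_densityRatio A _)
        (isBoundedUnder_densityRatio A _)

theorem density_le_one : density A ≤ 1 :=
  density_le_of_tendsto tendsto_const_nhds (densityRatio_le_one A)

end DensityRatio

section Independent

variable {S : Finset ℕ} {A : Set ℤ}

theorem IsIndepSet.ncard_inter_Icc_le (hA : IsIndepSet S A) (h1 : 1 ∈ S) (N : ℕ) :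
    (A ∩ Set.Icc (-(N : ℤ)) N).ncard ≤ N + 1 := by
  -- `a ↦ (a + N + 1) / 2` maps `[-N, N]` onto `[0, N]` and identifies only consecutive integers.
  have key : (A ∩ Set.Icc (-(N : ℤ)) N).ncard ≤ (Set.Icc (0 : ℤ) N).ncard := by
    refine Set.ncard_le_ncard_of_injOn (fun a => (a + N + 1) / 2) ?_ ?_ (Set.finite_Icc _ _)
    · rintro a ⟨-, ha⟩
      simp only [Set.mem_Icc] at ha ⊢
      omega
    · rintro a ⟨ha, -⟩ b ⟨hb, -⟩ hab
      by_contra hne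
      have : (a - b).natAbs = 1 := by dsimp only at hab; omega
      exact hA a ha b hb hne (this ▸ h1)
  rw [Int.ncard_Icc] at key
  omega

theorem IsIndepSet.density_le_half (hA : IsIndepSet S A) (h1 : 1 ∈ S) : density A ≤ 1 / 2 := by
  refine density_le_of_tendsto (g := fun N : ℕ => (1 + 1 * N) / (1 + 2 * N))
    (tendsto_add_mul_div_add_mul_atTop_nhds 1 1 1 two_ne_zero) fun N => ?_
  rw [densityRatio, add_comm (2 * (N : ℝ))]
  gcongr
  rw [one_mul, add_comm]
  exact_mod_cast hA.ncard_inter_Icc_le h1 N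

theorem IsIndepSet.density_le_indRatio (hA : IsIndepSet S A) : density A ≤ indRatio S :=
  le_csSup ⟨1, by rintro _ ⟨B, -, rfl⟩; exact density_le_one⟩ ⟨A, hA, rfl⟩

theorem indRatio_le_half (h1 : 1 ∈ S) : indRatio S ≤ 1 / 2 :=
  csSup_le ⟨_, ∅, fun _ h => h.elim, rfl⟩ fun _ ⟨_, hB, hdens⟩ => hdens ▸ hB.density_le_half h1

end Independent

def periodicSet (p : ℕ) (R : Finset ℤ) : Set ℤ :=
  {n | n % (p : ℤ) ∈ R}

theorem Int.emod_sub_emod_eq_or {p x y : ℤ} (hp : 0 < p) (hxy : 0 ≤ x - y) (hxy' : x - y < p) :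
    x % p - y % p = x - y ∨ x % p - y % p = x - y - p := by
  have hmod : x % p - y % p ≡ x - y [ZMOD p] := (Int.mod_modEq x p).sub (Int.mod_modEq y p)
  have hx := Int.emod_nonneg x hp.ne'
  have hx' := Int.emod_lt_of_pos x hp
  have hy := Int.emod_nonneg y hp.ne'
  have hy' := Int.emod_lt_of_pos y hp
  rcases le_or_gt (y % p) (x % p) with hle | hlt
  · left
    rw [Int.ModEq, Int.emod_eq_of_lt (by omega) (by omega), Int.emod_eq_of_lt hxy hxy'] at hmod
    exact hmod
  · right
    rw [Int.ModEq, ← Int.add_emod_right, Int.emod_eq_of_lt (by omega) (by omega),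
      Int.emod_eq_of_lt hxy hxy'] at hmod
    omega

theorem isIndepSet_periodicSet {p : ℕ} {R : Finset ℤ} {S : Finset ℕ} (hp : 0 < p)
    (hS : ∀ d ∈ S, d < p) (hRS : ∀ r ∈ R, ∀ s ∈ R, ∀ d ∈ S, r - s ≠ d ∧ r - s ≠ d - p) :
    IsIndepSet S (periodicSet p R) := by
  intro a ha b hb _ hd
  obtain ⟨x, hx, y, hy, hxy⟩ : ∃ x ∈ periodicSet p R, ∃ y ∈ periodicSet p R,
      x - y = (a - b).natAbs := by
    rcases Int.natAbs_eq (a - b) with h | h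
    · exact ⟨a, ha, b, hb, h⟩
    · exact ⟨b, hb, a, ha, by omega⟩
  have hdp : (((a - b).natAbs : ℕ) : ℤ) < p := by exact_mod_cast hS _ hd
  obtain ⟨hne, hne'⟩ := hRS _ hx _ hy _ hd
  rcases Int.emod_sub_emod_eq_or (p := p) (x := x) (y := y) (by omega) (by omega) (by omega)
    with h | h <;> omega

theorem ncard_periodicSet_inter_Icc {p : ℕ} {R : Finset ℤ} (hp : 0 < p)
    (hR : ∀ r ∈ R, 0 ≤ r ∧ r < p) (M : ℕ) :
    2 * M * #R ≤ (periodicSet p R ∩ Set.Icc (-((p * M : ℕ) : ℤ)) ((p * M : ℕ) : ℤ)).ncard := by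
  have hp' : (p : ℤ) ≠ 0 := by exact_mod_cast hp.ne'
  set embed : ℤ × ℤ → ℤ := fun mr => mr.2 + p * mr.1
  have hleft : ∀ mr ∈ Ico (-(M : ℤ)) M ×ˢ R, embed mr / p = mr.1 ∧ embed mr % p = mr.2 := by
    rintro ⟨m, r⟩ hmr
    obtain ⟨hr, hr'⟩ := hR r (mem_product.1 hmr).2
    exact ⟨by simp [embed, Int.add_mul_ediv_left _ _ hp', Int.ediv_eq_zero_of_lt hr hr'],
      by simp [embed, Int.emod_eq_of_lt hr hr']⟩
  calc 2 * M * #R = #((Ico (-(M : ℤ)) M ×ˢ R).image embed) := by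
        rw [card_image_of_injOn, card_product, Int.card_Ico]
        · congr; omega
        · intro a ha b hb hab
          exact Prod.ext ((hleft a ha).1.symm.trans (hab ▸ (hleft b hb).1))
            ((hleft a ha).2.symm.trans (hab ▸ (hleft b hb).2))
    _ ≤ _ := by
        rw [← Set.ncard_coe_finset]
        refine Set.ncard_le_ncard ?_ ((Set.finite_Icc _ _).inter_of_right _)
        intro n hn
        obtain ⟨⟨m, r⟩, hmr, rfl⟩ := Finset.mem_coe.1 hn |> Finset.mem_image.1
        obtain ⟨hm, hr⟩ := mem_product.1 hmr
        refine ⟨show _ % _ ∈ R from (hleft _ hmr).2 ▸ hr, ?_⟩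
        obtain ⟨hr0, hrp⟩ := hR r hr
        simp only [mem_Ico] at hm
        simp only [embed, Set.mem_Icc]
        push_cast
        constructor <;> nlinarith

theorem le_density_periodicSet {p : ℕ} {R : Finset ℤ} (hp : 0 < p)
    (hR : ∀ r ∈ R, 0 ≤ r ∧ r < p) : (#R : ℝ) / p ≤ density (periodicSet p R) := by
  have hlim := tendsto_add_mul_div_add_mul_atTop_nhds (0 : ℝ) 1 (2 * #R)
    (d := 2 * p) (by positivity)
  rw [mul_div_mul_left _ _ two_ne_zero] at hlim
  have hu : Tendsto (fun M => p * M) atTop atTop :=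
    tendsto_atTop_mono (fun M => Nat.le_mul_of_pos_left M hp) tendsto_id
  refine le_density_of_tendsto hu hlim fun M => ?_
  have hcount := ncard_periodicSet_inter_Icc hp hR M
  rw [densityRatio, zero_add, show 2 * ((p * M : ℕ) : ℝ) + 1 = 1 + 2 * p * M by push_cast; ring]
  gcongr
  exact_mod_cast (mul_right_comm 2 M #R).symm.trans_le hcount

def evenResidues (k : ℕ) : Finset ℤ :=
  (range k).image fun j : ℕ => 2 * (j : ℤ)

theorem card_evenResidues (k : ℕ) : #(evenResidues k) = k := by
  rw [evenResidues, card_image_of_injective _ fun a b h => by simpa using h, card_range]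

theorem isIndepSet_periodicSet_evenResidues (i k : ℕ) (hk : 1 ≤ k) :
    IsIndepSet ({1, 2 * i + 1, 2 * k} : Finset ℕ)
      (periodicSet (2 * k + 2 * i + 1) (evenResidues k)) := by
  refine isIndepSet_periodicSet (by omega) ?_ ?_
  · simp only [mem_insert, mem_singleton, forall_eq_or_imp, forall_eq]
    omega
  · simp only [evenResidues, mem_image, mem_range, mem_insert, mem_singleton]
    rintro _ ⟨j, hj, rfl⟩ _ ⟨l, hl, rfl⟩ d (rfl | rfl | rfl) <;> push_cast <;> omega

theorem div_le_indRatio_one_odd_even (i k : ℕ) (hk : 1 ≤ k) :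
    (k : ℝ) / (2 * k + 2 * i + 1) ≤ indRatio ({1, 2 * i + 1, 2 * k} : Finset ℕ) := by
  have hdens := le_density_periodicSet (p := 2 * k + 2 * i + 1) (R := evenResidues k) (by omega)
    (by simp only [evenResidues, mem_image, mem_range]; rintro _ ⟨j, hj, rfl⟩; omega)
  rw [card_evenResidues] at hdens
  push_cast at hdens
  exact hdens.trans (isIndepSet_periodicSet_evenResidues i k hk).density_le_indRatio

theorem tendsto_indRatio_one_odd_even_general (i : ℕ) :
    Filter.Tendsto (fun k : ℕ => indRatio ({1, 2 * i + 1, 2 * k} : Finset ℕ))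
      Filter.atTop (nhds (1 / 2 : ℝ)) := by
  have hlim : Tendsto (fun k : ℕ => (k : ℝ) / (2 * k + 2 * i + 1)) atTop (𝓝 (1 / 2)) := by
    convert tendsto_add_mul_div_add_mul_atTop_nhds (0 : ℝ) (2 * i + 1) 1 two_ne_zero using 2
    ring
  refine tendsto_of_tendsto_of_tendsto_of_le_of_le' hlim tendsto_const_nhds ?_ ?_
  · filter_upwards [eventually_ge_atTop 1] with k hk using div_le_indRatio_one_odd_even i k hk
  · exact Eventually.of_forall fun k => indRatio_le_half (mem_insert_self 1 _)

/-- For fixed `i ≥ 1`, `ᾱ({1, 2i+1, 2k}) → 1/2` as `k → ∞`. -/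
theorem tendsto_indRatio_one_odd_even (i : ℕ) (hi : 1 ≤ i) :
    Filter.Tendsto (fun k : ℕ => indRatio ({1, 2 * i + 1, 2 * k} : Finset ℕ))
      Filter.atTop (nhds (1 / 2 : ℝ)) :=
  tendsto_indRatio_one_odd_even_general i
end
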